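/- arXiv:2605.13103 — 5 statements merged into one kernel-verified Lean document; each statement's English description precedes it below -/
import Mathlib

section
/- Let α be a weight vector and suppose P_α ≻ 0 is a stabilizing solution of the algebraic Riccati equation AᵀP_α + P_αA + Q_α − P_αBR_α⁻¹BᵀP_α = 0 (so A − BR_α⁻¹BᵀP_α is Hurwitz) which moreover satisfies the structural condition SC1: G_i R_α⁻¹BᵀP_α (I_n − C_iᵀ(C_iC_iᵀ)⁻¹C_i) = 0 for all i. Set F⋆ = −R_α⁻¹BᵀP_α. Then (i) F⋆ satisfies SC2; (ii) A + BF⋆ is Hurwitz and J_α(F⋆, x0) = x0ᵀP_αx0 for every x0; and (iii) for every δ such that x0ᵀP_αx0 < δ for all ‖x0‖ ≤ r, the gain F⋆ belongs to the GCSC set ĝ_α(δ). -/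
open Matrix MeasureTheory

/-- A real square matrix is Hurwitz if every eigenvalue of its complexification
has strictly negative real part. -/
def IsHurwitz {n : ℕ} (A : Matrix (Fin n) (Fin n) ℝ) : Prop :=
  ∀ μ ∈ spectrum ℂ (A.map (algebraMap ℝ ℂ)), μ.re < 0

/-- Closed-loop trajectory `x(t) = exp (t Acl) x0`. -/
noncomputable def traj {n : ℕ} (Acl : Matrix (Fin n) (Fin n) ℝ) (x0 : Fin n → ℝ) (t : ℝ) :
    Fin n → ℝ :=
  NormedSpace.exp (t • Acl) *ᵥ x0

/-- Quadratic cost `∫₀^∞ x(t)ᵀ M x(t) dt` along the trajectory of `Acl` from `x0`. -/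
noncomputable def costJ {n : ℕ} (Acl M : Matrix (Fin n) (Fin n) ℝ) (x0 : Fin n → ℝ) : ℝ :=
  ∫ t in Set.Ioi (0 : ℝ), traj Acl x0 t ⬝ᵥ (M *ᵥ traj Acl x0 t)

/-- Euclidean norm on `Fin n → ℝ`. -/
noncomputable def euclNorm {n : ℕ} (x : Fin n → ℝ) : ℝ :=
  Real.sqrt (∑ i, x i ^ 2)

/-- The selector matrix `G i = [0 … I_{m_i} … 0]` picking out player `i`'s rows.
The total input index set is the sigma type `(j : Fin N) × Fin (mdim j)`,
a faithful model of `Fin (m₁ + ⋯ + m_N)`. -/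
def selG {N : ℕ} (mdim : Fin N → ℕ) (i : Fin N) :
    Matrix (Fin (mdim i)) ((j : Fin N) × Fin (mdim j)) ℝ :=
  Matrix.of fun k l => if l = ⟨i, k⟩ then 1 else 0

/-- Structural constraint SC2: `Gᵢ F (I − Cᵢᵀ(CᵢCᵢᵀ)⁻¹Cᵢ) = 0` for every player `i`. -/
def SC2 {n N : ℕ} {mdim sdim : Fin N → ℕ}
    (C : (i : Fin N) → Matrix (Fin (sdim i)) (Fin n) ℝ)
    (F : Matrix ((j : Fin N) × Fin (mdim j)) (Fin n) ℝ) : Prop :=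
  ∀ i, selG mdim i * F * (1 - (C i)ᵀ * (C i * (C i)ᵀ)⁻¹ * C i) = 0

section AuxHurwitz

open Filter Topology

attribute [local instance] Matrix.linftyOpNormedAddCommGroup Matrix.linftyOpNormedRing
  Matrix.linftyOpNormedAlgebra

private lemma exp_map_complex {n : ℕ} (M : Matrix (Fin n) (Fin n) ℝ) (t : ℝ) :
    (NormedSpace.exp (t • M)).map (algebraMap ℝ ℂ)
      = NormedSpace.exp ((t : ℂ) • M.map (algebraMap ℝ ℂ)) := by
  have hcont : Continuous ((algebraMap ℝ ℂ).mapMatrix :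
      Matrix (Fin n) (Fin n) ℝ →+* Matrix (Fin n) (Fin n) ℂ) :=
    continuous_id.matrix_map (continuous_algebraMap ℝ ℂ)
  have h1 := NormedSpace.map_exp ((algebraMap ℝ ℂ).mapMatrix (m := Fin n)) hcont (t • M)
  rw [RingHom.mapMatrix_apply, RingHom.mapMatrix_apply] at h1
  have h2 : (t • M).map ((algebraMap ℝ ℂ) : ℝ → ℂ) = (t : ℂ) • M.map (algebraMap ℝ ℂ) := by
    ext i j
    simp [Matrix.map_apply]
  rw [← h2]
  exact h1

private lemma complex_coef_tendsto (μ : ℂ) (hμ : μ.re < 0) (j : ℕ) :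
    Tendsto (fun t : ℝ => Complex.exp ((t : ℂ) * μ) * (t : ℂ) ^ j) atTop (𝓝 0) := by
  rw [tendsto_zero_iff_norm_tendsto_zero]
  have hc : (0 : ℝ) < -μ.re := by linarith
  have h0 : Tendsto (fun t : ℝ => ((-μ.re) * t) ^ j * Real.exp (-((-μ.re) * t))) atTop (𝓝 0) :=
    (Real.tendsto_pow_mul_exp_neg_atTop_nhds_zero j).comp (tendsto_id.const_mul_atTop hc)
  have h1 : Tendsto (fun t : ℝ => Real.exp (t * μ.re) * t ^ j) atTop (𝓝 0) := by
    have h2 := h0.const_mul (((-μ.re)⁻¹) ^ j)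
    rw [mul_zero] at h2
    refine h2.congr fun t => ?_
    have h3 : -(-μ.re * t) = t * μ.re := by ring
    rw [mul_pow, h3]
    field_simp
    rw [← mul_pow, neg_mul_neg, one_div, inv_mul_cancel₀ (by linarith : μ.re ≠ 0), one_pow, one_mul]
  refine h1.congr' ?_
  filter_upwards [Filter.eventually_gt_atTop 0] with t ht
  rw [norm_mul, norm_pow, Complex.norm_exp, Complex.norm_real,
    Real.norm_eq_abs, abs_of_pos ht, Complex.re_ofReal_mul]

private lemma gen_eig_decay {n : ℕ} (Ac : Matrix (Fin n) (Fin n) ℂ) (μ : ℂ) (hμ : μ.re < 0)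
    (k : ℕ) (z : Fin n → ℂ) (hz : ((Ac - μ • 1) ^ k) *ᵥ z = 0) :
    Tendsto (fun t : ℝ => NormedSpace.exp ((t : ℂ) • Ac) *ᵥ z) atTop (𝓝 0) := by
  set Nc : Matrix (Fin n) (Fin n) ℂ := Ac - μ • 1 with hN
  have key : ∀ t : ℝ, NormedSpace.exp ((t : ℂ) • Ac) *ᵥ z
      = ∑ j ∈ Finset.range k,
          ((Complex.exp ((t : ℂ) * μ) * (t : ℂ) ^ j) * (j.factorial : ℂ)⁻¹) • (Nc ^ j *ᵥ z) := by
    intro t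
    have hsplit : (t : ℂ) • Ac = (((t : ℂ) * μ) • (1 : Matrix (Fin n) (Fin n) ℂ)) + (t : ℂ) • Nc := by
      rw [hN, smul_sub, smul_smul]
      abel
    have hcomm : Commute (((t : ℂ) * μ) • (1 : Matrix (Fin n) (Fin n) ℂ)) ((t : ℂ) • Nc) :=
      ((Commute.one_left _).smul_left _).smul_right _
    have h1 : NormedSpace.exp (((t : ℂ) * μ) • (1 : Matrix (Fin n) (Fin n) ℂ))
        = Complex.exp ((t : ℂ) * μ) • (1 : Matrix (Fin n) (Fin n) ℂ) := by
      calc NormedSpace.exp (((t : ℂ) * μ) • (1 : Matrix (Fin n) (Fin n) ℂ))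
          = NormedSpace.exp (algebraMap ℂ (Matrix (Fin n) (Fin n) ℂ) ((t : ℂ) * μ)) := by
            rw [Algebra.algebraMap_eq_smul_one]
        _ = algebraMap ℂ (Matrix (Fin n) (Fin n) ℂ) (NormedSpace.exp ((t : ℂ) * μ)) :=
            (NormedSpace.map_exp (algebraMap ℂ (Matrix (Fin n) (Fin n) ℂ))
              (continuous_algebraMap _ _) _).symm
        _ = Complex.exp ((t : ℂ) * μ) • (1 : Matrix (Fin n) (Fin n) ℂ) := by
            rw [← Complex.exp_eq_exp_ℂ, Algebra.algebraMap_eq_smul_one]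
    have h2 : NormedSpace.exp ((t : ℂ) • Nc) *ᵥ z
        = ∑ j ∈ Finset.range k, (((t : ℂ) ^ j) * (j.factorial : ℂ)⁻¹) • (Nc ^ j *ᵥ z) := by
      let L : Matrix (Fin n) (Fin n) ℂ →ₗ[ℂ] (Fin n → ℂ) :=
        { toFun := fun E => E *ᵥ z
          map_add' := fun E F => Matrix.add_mulVec E F z
          map_smul' := fun c E => smul_mulVec c E z }
      have hLcont : Continuous L := LinearMap.continuous_of_finiteDimensional L
      have hsum : Summable (fun j : ℕ => (j.factorial : ℂ)⁻¹ • ((t : ℂ) • Nc) ^ j) :=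
        NormedSpace.expSeries_summable' _
      have hmap := hsum.hasSum.map L hLcont
      have hexp : NormedSpace.exp ((t : ℂ) • Nc)
          = ∑' j : ℕ, (j.factorial : ℂ)⁻¹ • ((t : ℂ) • Nc) ^ j := by
        rw [NormedSpace.exp_eq_tsum ℂ]
      have hterm : ∀ j : ℕ, L ((j.factorial : ℂ)⁻¹ • ((t : ℂ) • Nc) ^ j)
          = (((t : ℂ) ^ j) * (j.factorial : ℂ)⁻¹) • (Nc ^ j *ᵥ z) := by
        intro j
        rw [L.map_smul, smul_pow]
        show (j.factorial : ℂ)⁻¹ • (((t : ℂ) ^ j • Nc ^ j) *ᵥ z) = _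
        rw [smul_mulVec, smul_smul, mul_comm]
      have hvanish : ∀ j ∉ Finset.range k, L ((j.factorial : ℂ)⁻¹ • ((t : ℂ) • Nc) ^ j) = 0 := by
        intro j hj
        rw [Finset.mem_range, not_lt] at hj
        rw [hterm j]
        have : Nc ^ j *ᵥ z = 0 := by
          have : Nc ^ j = Nc ^ (j - k) * Nc ^ k := by rw [← pow_add]; congr 1; omega
          rw [this, ← mulVec_mulVec, hz, mulVec_zero]
        rw [this, smul_zero]
      have h3 : L (∑' (b : ℕ), ((b.factorial : ℂ))⁻¹ • ((t : ℂ) • Nc) ^ b)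
          = ∑ b ∈ Finset.range k, L (((b.factorial : ℂ))⁻¹ • ((t : ℂ) • Nc) ^ b) :=
        hmap.unique (hasSum_sum_of_ne_finset_zero hvanish)
      calc NormedSpace.exp ((t : ℂ) • Nc) *ᵥ z
          = L (∑' (b : ℕ), ((b.factorial : ℂ))⁻¹ • ((t : ℂ) • Nc) ^ b) := by rw [hexp]; rfl
        _ = ∑ b ∈ Finset.range k, L (((b.factorial : ℂ))⁻¹ • ((t : ℂ) • Nc) ^ b) := h3
        _ = _ := Finset.sum_congr rfl fun j _ => hterm j
    rw [hsplit, Matrix.exp_add_of_commute _ _ hcomm, h1, Matrix.smul_mul, Matrix.one_mul,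
      smul_mulVec, h2, Finset.smul_sum]
    refine Finset.sum_congr rfl fun j _ => ?_
    rw [smul_smul, mul_assoc]
  have h0 : Tendsto (fun t : ℝ => ∑ j ∈ Finset.range k,
      ((Complex.exp ((t : ℂ) * μ) * (t : ℂ) ^ j) * (j.factorial : ℂ)⁻¹) • (Nc ^ j *ᵥ z)) atTop
      (𝓝 (∑ j ∈ Finset.range k, (0 : Fin n → ℂ))) := by
    refine tendsto_finset_sum _ fun j _ => ?_
    have := ((complex_coef_tendsto μ hμ j).mul_const ((j.factorial : ℂ)⁻¹)).smul_const (Nc ^ j *ᵥ z)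
    simpa using this
  simp only [Finset.sum_const_zero] at h0
  exact h0.congr fun t => (key t).symm

private lemma hurwitz_decay {n : ℕ} (M : Matrix (Fin n) (Fin n) ℝ) (hM : IsHurwitz M)
    (x0 : Fin n → ℝ) :
    Tendsto (fun t : ℝ => NormedSpace.exp (t • M) *ᵥ x0) atTop (𝓝 0) := by
  set Ac : Matrix (Fin n) (Fin n) ℂ := M.map (algebraMap ℝ ℂ) with hAc
  set z0 : Fin n → ℂ := (algebraMap ℝ ℂ) ∘ x0 with hz0
  have hC : Tendsto (fun t : ℝ => NormedSpace.exp ((t : ℂ) • Ac) *ᵥ z0) atTop (𝓝 0) := by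
    set f : Module.End ℂ (Fin n → ℂ) := Matrix.toLinAlgEquiv' Ac with hf
    have htop := Module.End.iSup_maxGenEigenspace_eq_top f
    have hz0' : z0 ∈ ⨆ μ : ℂ, f.maxGenEigenspace μ := htop ▸ Submodule.mem_top
    refine Submodule.iSup_induction (motive := fun z =>
        Tendsto (fun t : ℝ => NormedSpace.exp ((t : ℂ) • Ac) *ᵥ z) atTop (𝓝 0))
      _ hz0' ?_ ?_ ?_
    · intro μ x hx
      rcases eq_or_ne x 0 with rfl | hxne
      · simpa [Matrix.mulVec_zero] using (tendsto_const_nhds :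
          Tendsto (fun _ : ℝ => (0 : Fin n → ℂ)) atTop (𝓝 0))
      · rw [Module.End.mem_maxGenEigenspace] at hx
        obtain ⟨k, hk⟩ := hx
        have hpow : ((f - μ • 1) ^ k) = Matrix.toLinAlgEquiv' ((Ac - μ • 1) ^ k) := by
          rw [hf, map_pow, map_sub, _root_.map_smul, _root_.map_one]
        have hmat : ((Ac - μ • 1) ^ k) *ᵥ x = 0 := by
          rw [hpow] at hk
          rwa [Matrix.toLinAlgEquiv'_apply] at hk
        have hμspec : μ ∈ spectrum ℂ Ac := by
          have h1 : f.HasEigenvalue μ := by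
            refine Module.End.hasEigenvalue_of_hasGenEigenvalue (k := k) ?_
            rw [Module.End.hasGenEigenvalue_iff]
            rw [Submodule.ne_bot_iff]
            refine ⟨x, ?_, hxne⟩
            rw [Module.End.mem_genEigenspace_nat, LinearMap.mem_ker]
            exact hk
          have h2 := h1.mem_spectrum
          rwa [AlgEquiv.spectrum_eq] at h2
        exact gen_eig_decay Ac μ (hM μ hμspec) k x hmat
    · simpa [Matrix.mulVec_zero] using (tendsto_const_nhds :
        Tendsto (fun _ : ℝ => (0 : Fin n → ℂ)) atTop (𝓝 0))
    · intro x y hx hy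
      have := hx.add hy
      rw [add_zero] at this
      exact this.congr fun t => by rw [Matrix.mulVec_add]
  rw [tendsto_pi_nhds]
  intro i
  have hi := (tendsto_pi_nhds.mp hC) i
  have heq : ∀ t : ℝ, (NormedSpace.exp ((t : ℂ) • Ac) *ᵥ z0) i
      = (((NormedSpace.exp (t • M) *ᵥ x0) i : ℝ) : ℂ) := by
    intro t
    rw [hAc, ← exp_map_complex]
    exact (RingHom.map_mulVec (algebraMap ℝ ℂ) _ x0 i).symm
  have h2 : Tendsto (fun t : ℝ => (((NormedSpace.exp (t • M) *ᵥ x0) i : ℝ) : ℂ)) atTop (𝓝 0) :=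
    hi.congr heq
  have h3 := (Complex.continuous_re.tendsto 0).comp h2
  simpa [Function.comp_def] using h3

private lemma hasDerivAt_dotProduct_mulVec {n : ℕ} {f h : ℝ → Fin n → ℝ} {f' h' : Fin n → ℝ}
    (P : Matrix (Fin n) (Fin n) ℝ) {t : ℝ}
    (hf : HasDerivAt f f' t) (hh : HasDerivAt h h' t) :
    HasDerivAt (fun s => f s ⬝ᵥ (P *ᵥ h s)) (f' ⬝ᵥ (P *ᵥ h t) + f t ⬝ᵥ (P *ᵥ h')) t := by
  have hfi := hasDerivAt_pi.mp hf
  have hhi := hasDerivAt_pi.mp hh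
  have key : HasDerivAt (fun s => ∑ i, f s i * ∑ j, P i j * h s j)
      (∑ i, (f' i * ∑ j, P i j * h t j + f t i * ∑ j, P i j * h' j)) t := by
    refine HasDerivAt.fun_sum fun i _ => ?_
    exact (hfi i).mul (HasDerivAt.fun_sum fun j _ => (hhi j).const_mul (P i j))
  have : (fun s => ∑ i, f s i * ∑ j, P i j * h s j) = fun s => f s ⬝ᵥ (P *ᵥ h s) := by
    funext s; simp [dotProduct, Matrix.mulVec]
  rw [this] at key
  convert key using 1
  simp [dotProduct, Matrix.mulVec, Finset.sum_add_distrib]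

private lemma quad_symm_identity {n : ℕ} (Acl P : Matrix (Fin n) (Fin n) ℝ) (y : Fin n → ℝ) :
    (Acl *ᵥ y) ⬝ᵥ (P *ᵥ y) + y ⬝ᵥ (P *ᵥ (Acl *ᵥ y))
      = y ⬝ᵥ ((Aclᵀ * P + P * Acl) *ᵥ y) := by
  rw [Matrix.add_mulVec, dotProduct_add]
  congr 1
  · refine Eq.symm ?_
    calc y ⬝ᵥ ((Aclᵀ * P) *ᵥ y) = y ⬝ᵥ (Aclᵀ *ᵥ (P *ᵥ y)) := by rw [Matrix.mulVec_mulVec]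
      _ = (y ᵥ* Aclᵀ) ⬝ᵥ (P *ᵥ y) := by rw [Matrix.dotProduct_mulVec]
      _ = (Acl *ᵥ y) ⬝ᵥ (P *ᵥ y) := by rw [Matrix.vecMul_transpose]
  · rw [← Matrix.mulVec_mulVec]

private lemma costJ_eq {n : ℕ} (Acl P M' : Matrix (Fin n) (Fin n) ℝ)
    (hLyap : Aclᵀ * P + P * Acl = -M') (hM' : M'.PosSemidef) (hHur : IsHurwitz Acl)
    (x0 : Fin n → ℝ) : costJ Acl M' x0 = x0 ⬝ᵥ (P *ᵥ x0) := by
  set xt : ℝ → Fin n → ℝ := traj Acl x0 with hxt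
  have hx : ∀ t : ℝ, HasDerivAt xt (Acl *ᵥ xt t) t := by
    intro t
    have hE : HasDerivAt (fun s : ℝ => NormedSpace.exp (s • Acl))
        (Acl * NormedSpace.exp (t • Acl)) t := hasDerivAt_exp_smul_const' Acl t
    let L : Matrix (Fin n) (Fin n) ℝ →ₗ[ℝ] (Fin n → ℝ) :=
      { toFun := fun E => E *ᵥ x0
        map_add' := fun E F => Matrix.add_mulVec E F x0
        map_smul' := fun c E => smul_mulVec c E x0 }
    have := (LinearMap.toContinuousLinearMap L).hasFDerivAt.comp_hasDerivAt t hE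
    have h2 : HasDerivAt (fun s : ℝ => NormedSpace.exp (s • Acl) *ᵥ x0)
        ((Acl * NormedSpace.exp (t • Acl)) *ᵥ x0) t := this
    rw [← Matrix.mulVec_mulVec] at h2
    exact h2
  set V : ℝ → ℝ := fun t => xt t ⬝ᵥ (P *ᵥ xt t) with hV
  have hVderiv : ∀ t : ℝ, HasDerivAt V (-(xt t ⬝ᵥ (M' *ᵥ xt t))) t := by
    intro t
    have := hasDerivAt_dotProduct_mulVec P (hx t) (hx t)
    have heq : (Acl *ᵥ xt t) ⬝ᵥ (P *ᵥ xt t) + xt t ⬝ᵥ (P *ᵥ (Acl *ᵥ xt t))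
        = -(xt t ⬝ᵥ (M' *ᵥ xt t)) := by
      rw [quad_symm_identity, hLyap, Matrix.neg_mulVec, dotProduct_neg]
    rwa [heq] at this
  have htend : Tendsto (fun t => -(V t)) atTop (𝓝 0) := by
    have hQ : Continuous (fun y : Fin n → ℝ => y ⬝ᵥ (P *ᵥ y)) :=
      continuous_id.dotProduct (continuous_const.matrix_mulVec continuous_id)
    have h0 : Tendsto xt atTop (𝓝 0) := hurwitz_decay Acl hHur x0
    have h1 := (hQ.tendsto 0).comp h0
    simpa [Function.comp] using h1.neg
  have hint := integral_Ioi_of_hasDerivAt_of_nonneg' (a := (0:ℝ))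
    (g := fun t => -(V t)) (g' := fun t => xt t ⬝ᵥ (M' *ᵥ xt t))
    (fun t _ => by simpa using (hVderiv t).fun_neg)
    (fun t _ => by simpa using hM'.dotProduct_mulVec_nonneg (xt t)) htend
  rw [costJ, hint]
  have hx0 : xt 0 = x0 := by
    rw [hxt]
    show NormedSpace.exp ((0:ℝ) • Acl) *ᵥ x0 = x0
    rw [zero_smul, NormedSpace.exp_zero, Matrix.one_mulVec]
  simp [hV, hx0]

end AuxHurwitz

section AuxPos

private lemma posSemidef_smul_real {n : ℕ} {A : Matrix (Fin n) (Fin n) ℝ} (hA : A.PosSemidef)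
    {c : ℝ} (hc : 0 ≤ c) : (c • A).PosSemidef := by
  refine Matrix.PosSemidef.of_dotProduct_mulVec_nonneg ?_ ?_
  · unfold Matrix.IsHermitian
    rw [conjTranspose_smul, hA.1]
    simp
  · intro x
    rw [Matrix.smul_mulVec, dotProduct_smul]
    exact mul_nonneg hc (hA.dotProduct_mulVec_nonneg x)

private lemma posDef_smul_real {n : ℕ} {A : Matrix (Fin n) (Fin n) ℝ} (hA : A.PosDef)
    {c : ℝ} (hc : 0 < c) : (c • A).PosDef := by
  refine Matrix.PosDef.of_dotProduct_mulVec_pos ?_ ?_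
  · unfold Matrix.IsHermitian
    rw [conjTranspose_smul, hA.1]
    simp
  · intro x hx
    rw [Matrix.smul_mulVec, dotProduct_smul]
    exact mul_pos hc (hA.dotProduct_mulVec_pos hx)

private lemma blockDiagonal'_mulVec_aux {N : ℕ} {mdim : Fin N → ℕ}
    (d : (i : Fin N) → Matrix (Fin (mdim i)) (Fin (mdim i)) ℝ)
    (v : ((j : Fin N) × Fin (mdim j)) → ℝ) (i : Fin N) (k : Fin (mdim i)) :
    (Matrix.blockDiagonal' d *ᵥ v) ⟨i, k⟩ = (d i *ᵥ fun l => v ⟨i, l⟩) k := by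
  rw [Matrix.mulVec, Matrix.mulVec, dotProduct, dotProduct]
  rw [← Finset.univ_sigma_univ, Finset.sum_sigma]
  rw [Finset.sum_eq_single_of_mem i (Finset.mem_univ i)]
  · congr 1
    ext l
    rw [Matrix.blockDiagonal'_apply]
    simp
  · intro j _ hj
    apply Finset.sum_eq_zero
    intro l _
    rw [Matrix.blockDiagonal'_apply]
    simp [hj.symm]

private lemma blockDiagonal'_quad {N : ℕ} {mdim : Fin N → ℕ}
    (d : (i : Fin N) → Matrix (Fin (mdim i)) (Fin (mdim i)) ℝ)
    (v : ((j : Fin N) × Fin (mdim j)) → ℝ) :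
    v ⬝ᵥ (Matrix.blockDiagonal' d *ᵥ v)
      = ∑ i, (fun l => v ⟨i, l⟩) ⬝ᵥ (d i *ᵥ fun l => v ⟨i, l⟩) := by
  rw [dotProduct, ← Finset.univ_sigma_univ, Finset.sum_sigma]
  refine Finset.sum_congr rfl fun i _ => ?_
  rw [dotProduct]
  refine Finset.sum_congr rfl fun k _ => ?_
  rw [blockDiagonal'_mulVec_aux]

private lemma blockDiagonal'_posDef {N : ℕ} {mdim : Fin N → ℕ}
    {d : (i : Fin N) → Matrix (Fin (mdim i)) (Fin (mdim i)) ℝ}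
    (hd : ∀ i, (d i).PosDef) : (Matrix.blockDiagonal' d).PosDef := by
  refine Matrix.PosDef.of_dotProduct_mulVec_pos ?_ ?_
  · unfold Matrix.IsHermitian
    rw [Matrix.blockDiagonal'_conjTranspose]
    have hdd : (fun k => (d k)ᴴ) = d := funext fun i => (hd i).1
    rw [hdd]
  · intro x hx
    rw [star_trivial, blockDiagonal'_quad]
    obtain ⟨⟨i0, k0⟩, hik⟩ : ∃ p, x p ≠ 0 := by
      by_contra h
      push_neg at h
      exact hx (funext fun p => h p)
    have hblock : (fun l => x ⟨i0, l⟩) ≠ 0 := by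
      intro h
      exact hik (congrFun h k0)
    refine Finset.sum_pos' (fun i _ => ?_) ⟨i0, Finset.mem_univ i0, ?_⟩
    · rcases eq_or_ne (fun l => x ⟨i, l⟩) 0 with h | h
      · rw [h]; simp
      · have := (hd i).dotProduct_mulVec_pos h
        rw [star_trivial] at this
        exact this.le
    · have := (hd i0).dotProduct_mulVec_pos hblock
      rw [star_trivial] at this
      exact this

end AuxPos

/-- an output-feedback Pareto optimal gain obtained from a stabilizing
solution of the weighted ARE satisfying SC1 (i) satisfies SC2, (ii) is stabilizing with
cost `x0ᵀ Pα x0`, and (iii) belongs to the GCSC set `ĝ_α(δ)` for every admissible `δ`. -/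
theorem pareto_gain_is_gcsc
    {n N : ℕ} {mdim sdim : Fin N → ℕ}
    (A : Matrix (Fin n) (Fin n) ℝ)
    (B : Matrix (Fin n) ((j : Fin N) × Fin (mdim j)) ℝ)
    (C : (i : Fin N) → Matrix (Fin (sdim i)) (Fin n) ℝ)
    (hCrank : ∀ i, (C i).rank = sdim i) (hCn : ∀ i, sdim i ≤ n)
    (Q : (i : Fin N) → Matrix (Fin (sdim i)) (Fin (sdim i)) ℝ)
    (hQ : ∀ i, (Q i).PosSemidef)
    (R : (i : Fin N) → Matrix (Fin (mdim i)) (Fin (mdim i)) ℝ)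
    (hR : ∀ i, (R i).PosDef)
    (α : Fin N → ℝ) (hα : ∀ i, α i ∈ Set.Ioo (0 : ℝ) 1) (hαsum : ∑ i, α i = 1)
    (Qα : Matrix (Fin n) (Fin n) ℝ)
    (hQα : Qα = ∑ i, α i • ((C i)ᵀ * Q i * C i))
    (Rα : Matrix ((j : Fin N) × Fin (mdim j)) ((j : Fin N) × Fin (mdim j)) ℝ)
    (hRα : Rα = Matrix.blockDiagonal' fun i => α i • R i)
    (r : ℝ) (hr : 0 < r)
    (Pα : Matrix (Fin n) (Fin n) ℝ) (hP : Pα.PosDef)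
    (hARE : Aᵀ * Pα + Pα * A + Qα - Pα * B * Rα⁻¹ * Bᵀ * Pα = 0)
    (hstab : IsHurwitz (A - B * (Rα⁻¹ * Bᵀ * Pα)))
    (hSC1 : ∀ i, selG mdim i * (Rα⁻¹ * Bᵀ * Pα) *
      (1 - (C i)ᵀ * (C i * (C i)ᵀ)⁻¹ * C i) = 0)
    (Fstar : Matrix ((j : Fin N) × Fin (mdim j)) (Fin n) ℝ)
    (hFstar : Fstar = -(Rα⁻¹ * Bᵀ * Pα)) :
    SC2 C Fstar ∧
    (IsHurwitz (A + B * Fstar) ∧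
      ∀ x0 : Fin n → ℝ,
        costJ (A + B * Fstar) (Qα + Fstarᵀ * Rα * Fstar) x0 = x0 ⬝ᵥ (Pα *ᵥ x0)) ∧
    ∀ δ : ℝ, (∀ x0 : Fin n → ℝ, euclNorm x0 ≤ r → x0 ⬝ᵥ (Pα *ᵥ x0) < δ) →
      (SC2 C Fstar ∧
        ∀ x0 : Fin n → ℝ, euclNorm x0 ≤ r →
          costJ (A + B * Fstar) (Qα + Fstarᵀ * Rα * Fstar) x0 < δ) := by
  -- basic facts
  have hSC2 : SC2 C Fstar := by
    intro i
    rw [hFstar, Matrix.mul_neg, Matrix.neg_mul, hSC1 i, neg_zero]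
  have hHur : IsHurwitz (A + B * Fstar) := by
    rw [hFstar, Matrix.mul_neg, ← sub_eq_add_neg]
    exact hstab
  -- positive definiteness of Rα
  have hRpos : Rα.PosDef := by
    rw [hRα]
    exact blockDiagonal'_posDef fun i => posDef_smul_real (hR i) (hα i).1
  have hRdet : IsUnit Rα.det := isUnit_iff_ne_zero.mpr (ne_of_gt hRpos.det_pos)
  have hPt : Pαᵀ = Pα := by
    rw [← Matrix.conjTranspose_eq_transpose_of_trivial]
    exact hP.1
  have hRt : Rαᵀ = Rα := by
    rw [← Matrix.conjTranspose_eq_transpose_of_trivial]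
    exact hRpos.1
  have hRinvT : (Rα⁻¹)ᵀ = Rα⁻¹ := by
    rw [Matrix.transpose_nonsing_inv, hRt]
  -- Lyapunov identity
  set K : Matrix ((j : Fin N) × Fin (mdim j)) (Fin n) ℝ := Rα⁻¹ * Bᵀ * Pα with hKdef
  set S : Matrix (Fin n) (Fin n) ℝ := Pα * (B * (Rα⁻¹ * (Bᵀ * Pα))) with hSdef
  have hKt : Kᵀ = Pα * B * Rα⁻¹ := by
    rw [hKdef, Matrix.transpose_mul, Matrix.transpose_mul, Matrix.transpose_transpose, hPt,
      hRinvT, ← Matrix.mul_assoc]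
  have hPBK : Pα * (B * K) = S := by
    rw [hKdef, hSdef]
    simp only [Matrix.mul_assoc]
  have hKtBt : Kᵀ * (Bᵀ * Pα) = S := by
    rw [hKt, hSdef]
    simp only [Matrix.mul_assoc]
  have hKtRK : Kᵀ * (Rα * K) = S := by
    rw [hKt, hKdef, hSdef]
    calc Pα * B * Rα⁻¹ * (Rα * (Rα⁻¹ * Bᵀ * Pα))
        = Pα * (B * ((Rα⁻¹ * Rα * Rα⁻¹) * (Bᵀ * Pα))) := by simp only [Matrix.mul_assoc]
      _ = Pα * (B * (Rα⁻¹ * (Bᵀ * Pα))) := by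
          rw [Matrix.nonsing_inv_mul Rα hRdet, Matrix.one_mul]
  have hARE' : Aᵀ * Pα + Pα * A + Qα = S := by
    rw [sub_eq_zero] at hARE
    rw [hARE, hSdef]
    simp only [Matrix.mul_assoc]
  have hFRF : Fstarᵀ * Rα * Fstar = S := by
    rw [hFstar]
    rw [Matrix.transpose_neg, Matrix.neg_mul, Matrix.neg_mul, Matrix.mul_neg, neg_neg]
    rw [Matrix.mul_assoc]
    exact hKtRK
  have hLyap : (A + B * Fstar)ᵀ * Pα + Pα * (A + B * Fstar) = -(Qα + Fstarᵀ * Rα * Fstar) := by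
    rw [hFRF]
    rw [hFstar, Matrix.mul_neg, ← sub_eq_add_neg]
    rw [Matrix.transpose_sub, Matrix.transpose_mul]
    rw [Matrix.sub_mul, Matrix.mul_sub]
    rw [Matrix.mul_assoc Kᵀ Bᵀ Pα, hKtBt, hPBK]
    have hQ' : Qα = S - Aᵀ * Pα - Pα * A := by
      rw [← hARE']; abel
    rw [hQ']
    abel
  -- positive semidefiniteness of the cost matrix
  have hQαpsd : Qα.PosSemidef := by
    rw [hQα]
    have hterm : ∀ i, (α i • ((C i)ᵀ * Q i * C i)).PosSemidef := by
      intro i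
      refine posSemidef_smul_real ?_ (hα i).1.le
      have := (hQ i).conjTranspose_mul_mul_same (C i)
      rwa [Matrix.conjTranspose_eq_transpose_of_trivial] at this
    classical
    refine Finset.sum_induction _ _ (fun a b ha hb => ha.add hb) ?_ fun i _ => hterm i
    exact Matrix.PosSemidef.zero
  have hFRFpsd : (Fstarᵀ * Rα * Fstar).PosSemidef := by
    have := hRpos.posSemidef.conjTranspose_mul_mul_same Fstar
    rwa [Matrix.conjTranspose_eq_transpose_of_trivial] at this
  have hMpsd : (Qα + Fstarᵀ * Rα * Fstar).PosSemidef := hQαpsd.add hFRFpsd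
  -- cost identity
  have hcost : ∀ x0 : Fin n → ℝ,
      costJ (A + B * Fstar) (Qα + Fstarᵀ * Rα * Fstar) x0 = x0 ⬝ᵥ (Pα *ᵥ x0) :=
    fun x0 => costJ_eq _ _ _ hLyap hMpsd hHur x0
  refine ⟨hSC2, ⟨hHur, hcost⟩, ?_⟩
  intro δ hδ
  refine ⟨hSC2, fun x0 hx0 => ?_⟩
  rw [hcost x0]
  exact hδ x0 hx0
end

section
/- (Lyapunov stability test.) Let A ∈ ℝ^{n×n} and suppose there exists a symmetric positive definite P ∈ ℝ^{n×n} such that AᵀP + PA ≺ 0 (i.e., −(AᵀP + PA) is positive definite). Then A is Hurwitz: every eigenvalue of the complexification of A has strictly negative real part. -/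
open Matrix MeasureTheory

lemma posdef_complexify {n : ℕ} {M : Matrix (Fin n) (Fin n) ℝ} (hM : M.PosDef)
    {v : Fin n → ℂ} (hv : v ≠ 0) :
    0 < (star v ⬝ᵥ ((M.map (algebraMap ℝ ℂ)) *ᵥ v)).re := by
  set a : Fin n → ℝ := fun i => (v i).re with ha
  set b : Fin n → ℝ := fun i => (v i).im with hb
  have key : (star v ⬝ᵥ ((M.map (algebraMap ℝ ℂ)) *ᵥ v)).re
      = a ⬝ᵥ (M *ᵥ a) + b ⬝ᵥ (M *ᵥ b) := by
    simp only [dotProduct, mulVec, Matrix.map_apply, Pi.star_apply, Finset.mul_sum,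
      Complex.re_sum, Complex.mul_re, Complex.mul_im, RCLike.star_def, Complex.conj_re,
      Complex.conj_im, Complex.coe_algebraMap, Complex.ofReal_re, Complex.ofReal_im]
    rw [← Finset.sum_add_distrib]
    refine Finset.sum_congr rfl fun i _ => ?_
    rw [← Finset.sum_add_distrib]
    refine Finset.sum_congr rfl fun j _ => ?_
    ring
  rw [key]
  rcases (not_and_or.mp (fun h : a = 0 ∧ b = 0 => hv (funext fun i =>
      Complex.ext (congrFun h.1 i) (congrFun h.2 i)))) with h | h
  · have := hM.dotProduct_mulVec_pos h
    have h2 := hM.posSemidef.dotProduct_mulVec_nonneg b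
    simp only [RCLike.re_to_real, star_trivial] at this h2 ⊢
    linarith
  · have := hM.dotProduct_mulVec_pos h
    have h2 := hM.posSemidef.dotProduct_mulVec_nonneg a
    simp only [RCLike.re_to_real, star_trivial] at this h2 ⊢
    linarith

/-- Lyapunov stability test: if there is a symmetric positive definite `P`
with `AᵀP + PA ≺ 0`, then `A` is Hurwitz. -/
theorem lyapunov_stability_test
    {n : ℕ} (A : Matrix (Fin n) (Fin n) ℝ)
    (P : Matrix (Fin n) (Fin n) ℝ) (hP : P.PosDef)
    (hLyap : (-(Aᵀ * P + P * A)).PosDef) :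
    IsHurwitz A := by
  intro μ hμ
  set Ac := A.map (algebraMap ℝ ℂ) with hAc
  set Pc := P.map (algebraMap ℝ ℂ) with hPc
  rw [← AlgEquiv.spectrum_eq (Matrix.toLinAlgEquiv (Pi.basisFun ℂ (Fin n))),
    ← Module.End.hasEigenvalue_iff_mem_spectrum] at hμ
  obtain ⟨v, hv⟩ := hμ.exists_hasEigenvector
  have hvne : v ≠ 0 := hv.2
  have heig : Ac *ᵥ v = μ • v := by
    have h1 := hv.apply_eq_smul
    have hr : ⇑((Pi.basisFun ℂ (Fin n)).repr v) = v := funext fun i => Pi.basisFun_repr (x := v) (i := i)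
    simpa [Matrix.toLinAlgEquiv_apply, hr, ← Pi.single_smul', Finset.univ_sum_single] using h1
  have hstar : Ac *ᵥ star v = star (Ac *ᵥ v) := by
    funext i
    simp only [mulVec, dotProduct, Pi.star_apply, star_sum, star_mul', hAc,
      Matrix.map_apply, Complex.coe_algebraMap, RCLike.star_def, Complex.conj_ofReal]
  have key : star v ⬝ᵥ (((Aᵀ * P + P * A).map (algebraMap ℝ ℂ)) *ᵥ v)
      = ((starRingEnd ℂ) μ + μ) * (star v ⬝ᵥ (Pc *ᵥ v)) := by
    rw [Matrix.map_add _ (map_add _), Matrix.map_mul (f := algebraMap ℝ ℂ),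
      Matrix.map_mul (f := algebraMap ℝ ℂ), Matrix.transpose_map,
      Matrix.add_mulVec, dotProduct_add, ← hAc, ← hPc,
      ← Matrix.mulVec_mulVec, ← Matrix.mulVec_mulVec,
      Matrix.dotProduct_mulVec (star v) Acᵀ, Matrix.vecMul_transpose,
      hstar, heig, Matrix.mulVec_smul, star_smul, smul_dotProduct, dotProduct_smul]
    simp only [RCLike.star_def, smul_eq_mul]
    ring
  have hq := posdef_complexify hLyap hvne
  have hp := posdef_complexify hP hvne
  have hmn : (-(Aᵀ * P + P * A)).map (algebraMap ℝ ℂ)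
      = -((Aᵀ * P + P * A).map (algebraMap ℝ ℂ)) := by
    ext i j; simp [Matrix.map_apply]
  rw [hmn, Matrix.neg_mulVec, dotProduct_neg, key,
    Complex.neg_re] at hq
  have hc : (starRingEnd ℂ) μ + μ = ((2 * μ.re : ℝ) : ℂ) := by
    rw [add_comm]; exact_mod_cast Complex.add_conj μ
  rw [hc, Complex.re_ofReal_mul] at hq
  nlinarith [hp]
end

section
/- (Existence/synthesis feasibility of a feedback GCSC.) Let r, δ > 0 and let Q_α ⪰ 0, R_α ≻ 0 be the weighted cost matrices. Suppose there exists a pair (P, F) with P ∈ ℝ^{n×n} symmetric positive definite and F ∈ ℝ^{m×n} such that: (a) (A+BF)ᵀP + P(A+BF) + Q_α + FᵀR_αF ≺ 0; (b) x0ᵀPx0 < δ for all x0 with ‖x0‖ ≤ r; and (c) F satisfies the structural constraint SC2, i.e., G_iF(I_n − C_iᵀ(C_iC_iᵀ)⁻¹C_i) = 0 for all i. Then A + BF is Hurwitz and the GCSC set ĝ_α(δ) is nonempty (indeed F ∈ ĝ_α(δ)). -/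
open Matrix MeasureTheory

/-! ### Auxiliary lemmas -/

section Aux

open NormedSpace

attribute [local instance] Matrix.linftyOpNormedRing Matrix.linftyOpNormedAlgebra

/-- `M ↦ M *ᵥ x0` as a continuous linear map. -/
noncomputable def mvCLM {n : ℕ} (x0 : Fin n → ℝ) :
    Matrix (Fin n) (Fin n) ℝ →L[ℝ] (Fin n → ℝ) :=
  LinearMap.toContinuousLinearMap
    { toFun := fun M => M *ᵥ x0
      map_add' := fun M N => Matrix.add_mulVec M N x0
      map_smul' := fun c M => by simp [Matrix.smul_mulVec] }

lemma traj_hasDerivAt {n : ℕ} (Acl : Matrix (Fin n) (Fin n) ℝ) (x0 : Fin n → ℝ) (t : ℝ) :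
    HasDerivAt (traj Acl x0) (Acl *ᵥ traj Acl x0 t) t := by
  have h1 : HasDerivAt (fun u : ℝ => exp (u • Acl)) (Acl * exp (t • Acl)) t :=
    hasDerivAt_exp_smul_const' Acl t
  have h2 := (mvCLM x0).hasFDerivAt.comp_hasDerivAt t h1
  have e1 : (fun u : ℝ => (mvCLM x0) (exp (u • Acl))) = traj Acl x0 := by
    funext u
    simp [mvCLM, traj, LinearMap.coe_toContinuousLinearMap']
  have e2 : (mvCLM x0) (Acl * exp (t • Acl)) = Acl *ᵥ traj Acl x0 t := by
    simp [mvCLM, traj, LinearMap.coe_toContinuousLinearMap', Matrix.mulVec_mulVec]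
  rw [Function.comp_def, e1] at h2
  exact h2.congr_deriv e2

lemma traj_zero {n : ℕ} (Acl : Matrix (Fin n) (Fin n) ℝ) (x0 : Fin n → ℝ) :
    traj Acl x0 0 = x0 := by
  simp [traj, NormedSpace.exp_zero]

end Aux

lemma hasDerivAt_quadForm {n : ℕ} (M : Matrix (Fin n) (Fin n) ℝ) {x : ℝ → Fin n → ℝ}
    {x' : Fin n → ℝ} {t : ℝ} (hx : HasDerivAt x x' t) :
    HasDerivAt (fun s => x s ⬝ᵥ M *ᵥ x s) (x' ⬝ᵥ M *ᵥ x t + x t ⬝ᵥ M *ᵥ x') t := by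
  have hxi : ∀ i, HasDerivAt (fun s => x s i) (x' i) t := hasDerivAt_pi.1 hx
  have h : HasDerivAt (fun s => ∑ i, x s i * ∑ j, M i j * x s j)
      (∑ i, (x' i * ∑ j, M i j * x t j + x t i * ∑ j, M i j * x' j)) t := by
    refine HasDerivAt.fun_sum fun i _ => ?_
    exact (hxi i).mul (HasDerivAt.fun_sum fun j _ => (hxi j).const_mul (M i j))
  have e1 : (fun s => x s ⬝ᵥ M *ᵥ x s) = fun s => ∑ i, x s i * ∑ j, M i j * x s j := by
    funext s; simp [dotProduct, Matrix.mulVec]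
  have e2 : x' ⬝ᵥ M *ᵥ x t + x t ⬝ᵥ M *ᵥ x' =
      ∑ i, (x' i * ∑ j, M i j * x t j + x t i * ∑ j, M i j * x' j) := by
    simp [dotProduct, Matrix.mulVec, Finset.sum_add_distrib]
  rw [e1, e2]; exact h

lemma quad_shift {n : ℕ} (A P : Matrix (Fin n) (Fin n) ℝ) (y z : Fin n → ℝ) :
    (A *ᵥ y) ⬝ᵥ (P *ᵥ z) = y ⬝ᵥ ((Aᵀ * P) *ᵥ z) := by
  rw [← Matrix.mulVec_mulVec, Matrix.dotProduct_mulVec y, Matrix.vecMul_transpose]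

lemma costJ_le_quad {n : ℕ} (Acl M P : Matrix (Fin n) (Fin n) ℝ)
    (hM : M.PosSemidef) (hP : P.PosSemidef)
    (hkey : ∀ y : Fin n → ℝ, y ⬝ᵥ M *ᵥ y + y ⬝ᵥ ((Aclᵀ * P + P * Acl) *ᵥ y) ≤ 0)
    (x0 : Fin n → ℝ) :
    costJ Acl M x0 ≤ x0 ⬝ᵥ P *ᵥ x0 := by
  classical
  set x : ℝ → Fin n → ℝ := traj Acl x0 with hxdef
  set f : ℝ → ℝ := fun t => x t ⬝ᵥ M *ᵥ x t with hfdef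
  set g : ℝ → ℝ := fun t => x t ⬝ᵥ ((Aclᵀ * P + P * Acl) *ᵥ x t) with hgdef
  set V : ℝ → ℝ := fun t => x t ⬝ᵥ P *ᵥ x t with hVdef
  have hf0 : ∀ t, 0 ≤ f t := fun t => by simpa using hM.dotProduct_mulVec_nonneg (x t)
  have hV0 : ∀ t, 0 ≤ V t := fun t => by simpa using hP.dotProduct_mulVec_nonneg (x t)
  have hVd : ∀ t, HasDerivAt V (g t) t := by
    intro t
    have h := hasDerivAt_quadForm P (traj_hasDerivAt Acl x0 t)
    have e : (Acl *ᵥ x t) ⬝ᵥ P *ᵥ x t + x t ⬝ᵥ P *ᵥ (Acl *ᵥ x t) = g t := by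
      rw [quad_shift, ← Matrix.mulVec_mulVec, Matrix.mulVec_mulVec, hgdef]
      simp [Matrix.add_mulVec, dotProduct_add]
    rw [← e]; exact h
  have hfd : ∀ t, HasDerivAt f
      ((Acl *ᵥ x t) ⬝ᵥ M *ᵥ x t + x t ⬝ᵥ M *ᵥ (Acl *ᵥ x t)) t :=
    fun t => hasDerivAt_quadForm M (traj_hasDerivAt Acl x0 t)
  have hfc : Continuous f := by
    rw [continuous_iff_continuousAt]; exact fun t => (hfd t).continuousAt
  have hgc : Continuous g := by
    rw [continuous_iff_continuousAt]
    intro t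
    exact (hasDerivAt_quadForm (Aclᵀ * P + P * Acl) (traj_hasDerivAt Acl x0 t)).continuousAt
  have hV_at0 : V 0 = x0 ⬝ᵥ P *ᵥ x0 := by
    simp [hVdef, hxdef, traj_zero]
  have hbound : ∀ T : ℝ, 0 ≤ T → (∫ t in (0:ℝ)..T, f t) ≤ x0 ⬝ᵥ P *ᵥ x0 := by
    intro T hT
    have hgint : IntervalIntegrable g volume 0 T := hgc.intervalIntegrable _ _
    have hftc : (∫ t in (0:ℝ)..T, g t) = V T - V 0 :=
      intervalIntegral.integral_eq_sub_of_hasDerivAt (fun t _ => hVd t) hgint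
    have hmono : (∫ t in (0:ℝ)..T, f t) ≤ ∫ t in (0:ℝ)..T, -g t := by
      refine intervalIntegral.integral_mono_on hT (hfc.intervalIntegrable _ _)
        (hgc.neg.intervalIntegrable _ _) fun s _ => ?_
      have := hkey (x s); simp only [hfdef, hgdef]; linarith
    have hneg : (∫ t in (0:ℝ)..T, -g t) = V 0 - V T := by
      rw [intervalIntegral.integral_neg, hftc]; ring
    rw [hneg, hV_at0] at hmono
    have := hV0 T
    linarith
  by_cases hi : IntegrableOn f (Set.Ioi 0) volume
  · have htend := intervalIntegral_tendsto_integral_Ioi 0 hi Filter.tendsto_id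
    have hcost : costJ Acl M x0 = ∫ t in Set.Ioi (0:ℝ), f t := rfl
    rw [hcost]
    refine le_of_tendsto htend ?_
    filter_upwards [Filter.eventually_ge_atTop (0:ℝ)] with T hT
    exact hbound T hT
  · have hcost : costJ Acl M x0 = 0 := integral_undef hi
    rw [hcost]
    have := hP.dotProduct_mulVec_nonneg x0; simpa using this

lemma re_quad_complex {n : ℕ} (M : Matrix (Fin n) (Fin n) ℝ) (v : Fin n → ℂ) :
    (star v ⬝ᵥ ((M.map (algebraMap ℝ ℂ)) *ᵥ v)).re
      = (fun i => (v i).re) ⬝ᵥ M *ᵥ (fun i => (v i).re)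
        + (fun i => (v i).im) ⬝ᵥ M *ᵥ (fun i => (v i).im) := by
  have h : (star v ⬝ᵥ ((M.map (algebraMap ℝ ℂ)) *ᵥ v)).re
      = ∑ i, ∑ j, M i j * ((v i).re * (v j).re + (v i).im * (v j).im) := by
    simp only [dotProduct, Matrix.mulVec, Pi.star_apply, Matrix.map_apply,
      Finset.mul_sum, Complex.re_sum]
    refine Finset.sum_congr rfl fun i _ => Finset.sum_congr rfl fun j _ => ?_
    simp [Complex.mul_re, Complex.mul_im, RCLike.star_def]
    ring
  rw [h]
  simp only [dotProduct, Matrix.mulVec, Finset.mul_sum, ← Finset.sum_add_distrib]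
  refine Finset.sum_congr rfl fun i _ => Finset.sum_congr rfl fun j _ => ?_
  ring

lemma mulVec_star_real {n : ℕ} (M : Matrix (Fin n) (Fin n) ℝ) (v : Fin n → ℂ) :
    (M.map (algebraMap ℝ ℂ)) *ᵥ (star v) = star ((M.map (algebraMap ℝ ℂ)) *ᵥ v) := by
  funext i
  simp only [Matrix.mulVec, dotProduct, Pi.star_apply, Matrix.map_apply, RCLike.star_def,
    map_sum]
  refine Finset.sum_congr rfl fun j _ => ?_
  rw [_root_.map_mul]
  congr 1
  simp

lemma lyapunov_hurwitz {n : ℕ} (Acl P W : Matrix (Fin n) (Fin n) ℝ)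
    (hP : P.PosDef) (hW : W.PosDef) (hEq : Aclᵀ * P + P * Acl = -W) :
    IsHurwitz Acl := by
  intro μ hμ
  set c : ℝ →+* ℂ := algebraMap ℝ ℂ
  set Aℂ := Acl.map c with hAc
  have hspec : spectrum ℂ (Matrix.toLinAlgEquiv' Aℂ) = spectrum ℂ Aℂ :=
    AlgEquiv.spectrum_eq _ _
  have hev : Module.End.HasEigenvalue (Matrix.toLinAlgEquiv' Aℂ) μ := by
    rw [Module.End.hasEigenvalue_iff_mem_spectrum, hspec]; exact hμ
  obtain ⟨v, hv⟩ := hev.exists_hasEigenvector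
  have hv0 : v ≠ 0 := hv.right
  have hAv : Aℂ *ᵥ v = μ • v := by
    have := hv.apply_eq_smul
    simpa [Matrix.toLinAlgEquiv'_apply] using this
  have key : star v ⬝ᵥ (((Aclᵀ * P + P * Acl).map c) *ᵥ v)
      = ((starRingEnd ℂ) μ + μ) * (star v ⬝ᵥ ((P.map c) *ᵥ v)) := by
    have hmap : (Aclᵀ * P + P * Acl).map c = Aℂᵀ * P.map c + P.map c * Aℂ := by
      rw [Matrix.map_add _ (map_add c), Matrix.map_mul, Matrix.map_mul, Matrix.transpose_map]
    rw [hmap, Matrix.add_mulVec, dotProduct_add]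
    have t2 : star v ⬝ᵥ ((P.map c * Aℂ) *ᵥ v) = μ * (star v ⬝ᵥ ((P.map c) *ᵥ v)) := by
      rw [← Matrix.mulVec_mulVec, hAv, Matrix.mulVec_smul, dotProduct_smul, smul_eq_mul]
    have t1 : star v ⬝ᵥ ((Aℂᵀ * P.map c) *ᵥ v)
        = (starRingEnd ℂ) μ * (star v ⬝ᵥ ((P.map c) *ᵥ v)) := by
      rw [← Matrix.mulVec_mulVec, Matrix.dotProduct_mulVec (star v), Matrix.vecMul_transpose,
        mulVec_star_real, hAv, star_smul, smul_dotProduct, smul_eq_mul]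
      rfl
    rw [t1, t2]; ring
  have hre := congrArg Complex.re key
  set a : Fin n → ℝ := fun i => (v i).re with hadef
  set b : Fin n → ℝ := fun i => (v i).im with hbdef
  have hab : ¬(a = 0 ∧ b = 0) := by
    rintro ⟨ha, hb⟩
    apply hv0
    funext i
    exact Complex.ext (congrFun ha i) (congrFun hb i)
  have hPpos : 0 < a ⬝ᵥ P *ᵥ a + b ⬝ᵥ P *ᵥ b := by
    have hpa := hP.posSemidef.dotProduct_mulVec_nonneg a
    have hpb := hP.posSemidef.dotProduct_mulVec_nonneg b
    simp only [star_trivial] at hpa hpb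
    rcases Classical.em (a = 0) with ha | ha
    · have hb : b ≠ 0 := fun hb => hab ⟨ha, hb⟩
      have := hP.dotProduct_mulVec_pos hb; simp only [star_trivial] at this; linarith
    · have := hP.dotProduct_mulVec_pos ha; simp only [star_trivial] at this; linarith
  have hWneg : a ⬝ᵥ (-W) *ᵥ a + b ⬝ᵥ (-W) *ᵥ b < 0 := by
    have hwa := hW.posSemidef.dotProduct_mulVec_nonneg a
    have hwb := hW.posSemidef.dotProduct_mulVec_nonneg b
    simp only [star_trivial] at hwa hwb
    have h1 : a ⬝ᵥ (-W) *ᵥ a = -(a ⬝ᵥ W *ᵥ a) := by simp [Matrix.neg_mulVec]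
    have h2 : b ⬝ᵥ (-W) *ᵥ b = -(b ⬝ᵥ W *ᵥ b) := by simp [Matrix.neg_mulVec]
    rw [h1, h2]
    rcases Classical.em (a = 0) with ha | ha
    · have hb : b ≠ 0 := fun hb => hab ⟨ha, hb⟩
      have := hW.dotProduct_mulVec_pos hb; simp only [star_trivial] at this; linarith
    · have := hW.dotProduct_mulVec_pos ha; simp only [star_trivial] at this; linarith
  have hLHS : (star v ⬝ᵥ (((Aclᵀ * P + P * Acl).map c) *ᵥ v)).re
      = a ⬝ᵥ (-W) *ᵥ a + b ⬝ᵥ (-W) *ᵥ b := by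
    rw [hEq]; exact re_quad_complex (-W) v
  have hRHS : (((starRingEnd ℂ) μ + μ) * (star v ⬝ᵥ ((P.map c) *ᵥ v))).re
      = 2 * μ.re * (a ⬝ᵥ P *ᵥ a + b ⬝ᵥ P *ᵥ b) := by
    have h1 : (starRingEnd ℂ) μ + μ = ((2 * μ.re : ℝ) : ℂ) := by
      rw [add_comm]; exact Complex.add_conj μ
    rw [h1, Complex.re_ofReal_mul, re_quad_complex P v]
  rw [hLHS, hRHS] at hre
  nlinarith

/-- existence/synthesis feasibility of a feedback GCSC: a pair `(P, F)`
with `P ≻ 0` satisfying the guaranteed-cost matrix inequality, the level constraint on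
the ball of radius `r`, and the structural constraint SC2 yields a stabilizing member
of the GCSC set `ĝ_α(δ)`, which is therefore nonempty. -/
theorem gcsc_existence
    {n N : ℕ} {mdim sdim : Fin N → ℕ}
    (A : Matrix (Fin n) (Fin n) ℝ)
    (B : Matrix (Fin n) ((j : Fin N) × Fin (mdim j)) ℝ)
    (C : (i : Fin N) → Matrix (Fin (sdim i)) (Fin n) ℝ)
    (hCrank : ∀ i, (C i).rank = sdim i) (hCn : ∀ i, sdim i ≤ n)
    (Qα : Matrix (Fin n) (Fin n) ℝ) (hQα : Qα.PosSemidef)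
    (Rα : Matrix ((j : Fin N) × Fin (mdim j)) ((j : Fin N) × Fin (mdim j)) ℝ)
    (hRα : Rα.PosDef)
    (r : ℝ) (hr : 0 < r) (δ : ℝ) (hδ : 0 < δ)
    (P : Matrix (Fin n) (Fin n) ℝ) (hP : P.PosDef)
    (F : Matrix ((j : Fin N) × Fin (mdim j)) (Fin n) ℝ)
    (ha : (-((A + B * F)ᵀ * P + P * (A + B * F) + Qα + Fᵀ * Rα * F)).PosDef)
    (hb : ∀ x0 : Fin n → ℝ, euclNorm x0 ≤ r → x0 ⬝ᵥ (P *ᵥ x0) < δ)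
    (hc : SC2 C F) :
    IsHurwitz (A + B * F) ∧
      (SC2 C F ∧
        ∀ x0 : Fin n → ℝ, euclNorm x0 ≤ r →
          costJ (A + B * F) (Qα + Fᵀ * Rα * F) x0 < δ) ∧
      ∃ F' : Matrix ((j : Fin N) × Fin (mdim j)) (Fin n) ℝ,
        SC2 C F' ∧
          ∀ x0 : Fin n → ℝ, euclNorm x0 ≤ r →
            costJ (A + B * F') (Qα + F'ᵀ * Rα * F') x0 < δ := by
  
  classical
  set Acl : Matrix (Fin n) (Fin n) ℝ := A + B * F with hAcl
  set M0 : Matrix (Fin n) (Fin n) ℝ := Qα + Fᵀ * Rα * F with hM0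
  set W : Matrix (Fin n) (Fin n) ℝ :=
    -((A + B * F)ᵀ * P + P * (A + B * F) + Qα + Fᵀ * Rα * F) with hWdef
  have hW : W.PosDef := ha
  have hFRF : (Fᵀ * Rα * F).PosSemidef := by
    have h := hRα.posSemidef.conjTranspose_mul_mul_same F
    rwa [Matrix.conjTranspose_eq_transpose_of_trivial] at h
  have hMsd : M0.PosSemidef := hQα.add hFRF
  have hSM : Aclᵀ * P + P * Acl + M0 = -W := by
    rw [hWdef, hAcl, hM0, neg_neg]; abel
  have hEq : Aclᵀ * P + P * Acl = -(W + M0) := by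
    have h := eq_sub_of_add_eq hSM
    rw [h]; abel
  have hHur : IsHurwitz Acl :=
    lyapunov_hurwitz Acl P (W + M0) hP (hW.add_posSemidef hMsd) hEq
  have hkey : ∀ y : Fin n → ℝ, y ⬝ᵥ M0 *ᵥ y + y ⬝ᵥ ((Aclᵀ * P + P * Acl) *ᵥ y) ≤ 0 := by
    intro y
    have h1 : y ⬝ᵥ (M0 + (Aclᵀ * P + P * Acl)) *ᵥ y
        = y ⬝ᵥ M0 *ᵥ y + y ⬝ᵥ ((Aclᵀ * P + P * Acl) *ᵥ y) := by
      rw [Matrix.add_mulVec, dotProduct_add]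
    have h2 : M0 + (Aclᵀ * P + P * Acl) = -W := by rw [← hSM]; abel
    have h3 := hW.posSemidef.dotProduct_mulVec_nonneg y
    simp only [star_trivial] at h3
    rw [← h1, h2]
    have h4 : y ⬝ᵥ (-W) *ᵥ y = -(y ⬝ᵥ W *ᵥ y) := by simp [Matrix.neg_mulVec]
    rw [h4]; linarith
  have hcost : ∀ x0 : Fin n → ℝ, euclNorm x0 ≤ r →
      costJ Acl M0 x0 < δ := by
    intro x0 hx0
    have h1 := costJ_le_quad Acl M0 P hMsd hP.posSemidef hkey x0
    have h2 := hb x0 hx0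
    linarith
  exact ⟨hHur, ⟨hc, hcost⟩, ⟨F, hc, hcost⟩⟩
end

section
/- (Projection lemma.) Let E ∈ ℝ^{n×m} with rank(E) = m < n, H ∈ ℝ^{s×n} with rank(H) = s < n, and let Ω ∈ ℝ^{n×n} be symmetric. Let N_{E'} ∈ ℝ^{n×(n−m)} be any matrix whose columns form an orthonormal basis of the null space of Eᵀ (so EᵀN_{E'} = 0 and N_{E'}ᵀN_{E'} = I_{n−m}), and let N_H ∈ ℝ^{n×(n−s)} be any matrix whose columns form an orthonormal basis of the null space of H (so HN_H = 0 and N_HᵀN_H = I_{n−s}). Then there exists F ∈ ℝ^{m×s} such that Ω + EFH + (EFH)ᵀ ≺ 0 if and only if N_{E'}ᵀ Ω N_{E'} ≺ 0 and N_Hᵀ Ω N_H ≺ 0. -/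
open Matrix MeasureTheory

namespace ProjLemAux

variable {n m s p q k : ℕ}

lemma mulVec_dot (M : Matrix (Fin p) (Fin q) ℝ) (v : Fin q → ℝ) (u : Fin p → ℝ) :
    (M *ᵥ v) ⬝ᵥ u = v ⬝ᵥ (Mᵀ *ᵥ u) := by
  rw [dotProduct_mulVec, vecMul_transpose]

lemma dot_sandwich (P : Matrix (Fin p) (Fin q) ℝ) (M : Matrix (Fin p) (Fin p) ℝ)
    (c : Fin q → ℝ) :
    c ⬝ᵥ ((Pᵀ * M * P) *ᵥ c) = (P *ᵥ c) ⬝ᵥ (M *ᵥ (P *ᵥ c)) := by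
  rw [← mulVec_mulVec, ← mulVec_mulVec]
  exact (mulVec_dot P c _).symm

lemma dot_EEt (E : Matrix (Fin p) (Fin q) ℝ) (x : Fin p → ℝ) :
    x ⬝ᵥ ((E * Eᵀ) *ᵥ x) = (Eᵀ *ᵥ x) ⬝ᵥ (Eᵀ *ᵥ x) := by
  have h : E * Eᵀ = Eᵀᵀ * (1 : Matrix (Fin q) (Fin q) ℝ) * Eᵀ := by simp
  rw [h, dot_sandwich, one_mulVec]

lemma dot_self_nonneg (v : Fin p → ℝ) : 0 ≤ v ⬝ᵥ v :=
  Finset.sum_nonneg fun i _ => mul_self_nonneg _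

lemma cont_quad (M : Matrix (Fin n) (Fin n) ℝ) :
    Continuous fun x : Fin n → ℝ => x ⬝ᵥ (M *ᵥ x) := by
  simp only [dotProduct, mulVec]
  exact continuous_finset_sum _ fun i _ =>
    (continuous_apply i).mul (continuous_finset_sum _ fun j _ =>
      continuous_const.mul (continuous_apply j))

lemma cont_dot_self : Continuous fun x : Fin n → ℝ => x ⬝ᵥ x := by
  simp only [dotProduct]
  exact continuous_finset_sum _ fun i _ => (continuous_apply i).mul (continuous_apply i)

lemma quad_smul (M : Matrix (Fin n) (Fin n) ℝ) (c : ℝ) (v : Fin n → ℝ) :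
    (c • v) ⬝ᵥ (M *ᵥ (c • v)) = c * (c * (v ⬝ᵥ (M *ᵥ v))) := by
  rw [mulVec_smul, smul_dotProduct, dotProduct_smul]
  simp [smul_eq_mul]

lemma range_ker (H : Matrix (Fin s) (Fin n) ℝ) (hH : H.rank = s)
    (N : Matrix (Fin n) (Fin k) ℝ) (h0 : H * N = 0) (horth : Nᵀ * N = 1)
    (hks : k + s = n) :
    ∀ y : Fin n → ℝ, H *ᵥ y = 0 → ∃ c, N *ᵥ c = y := by
  have hNl : ∀ c, Nᵀ *ᵥ (N *ᵥ c) = c := by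
    intro c; rw [mulVec_mulVec, horth, one_mulVec]
  have hNinj : Function.Injective N.mulVecLin := by
    intro a b hab
    have : Nᵀ *ᵥ (N *ᵥ a) = Nᵀ *ᵥ (N *ᵥ b) := by
      simpa only [mulVecLin_apply] using congrArg (Nᵀ *ᵥ ·) hab
    rwa [hNl, hNl] at this
  have hle : LinearMap.range N.mulVecLin ≤ LinearMap.ker H.mulVecLin := by
    rintro x ⟨c, rfl⟩
    simp [LinearMap.mem_ker, mulVecLin_apply, mulVec_mulVec, h0]
  have h1 : Module.finrank ℝ (LinearMap.range N.mulVecLin) = k := by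
    rw [LinearMap.finrank_range_of_inj hNinj]
    simp
  have h2 : Module.finrank ℝ (LinearMap.ker H.mulVecLin) = k := by
    have hrn := H.mulVecLin.finrank_range_add_finrank_ker
    have hr : Module.finrank ℝ (LinearMap.range H.mulVecLin) = s := hH
    rw [hr] at hrn
    simp only [Module.finrank_pi, Fintype.card_fin] at hrn
    omega
  have heq : LinearMap.range N.mulVecLin = LinearMap.ker H.mulVecLin :=
    Submodule.eq_of_le_of_finrank_eq hle (h1.trans h2.symm)
  intro y hy
  have hmem : y ∈ LinearMap.ker H.mulVecLin := by
    simpa [LinearMap.mem_ker, mulVecLin_apply] using hy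
  rw [← heq] at hmem
  obtain ⟨c, hc⟩ := hmem
  exact ⟨c, by simpa only [mulVecLin_apply] using hc⟩

lemma mulVec_inj (M : Matrix (Fin p) (Fin q) ℝ) (h : M.rank = q)
    {u : Fin q → ℝ} (hu : M *ᵥ u = 0) : u = 0 := by
  have hrn := M.mulVecLin.finrank_range_add_finrank_ker
  have hr : Module.finrank ℝ (LinearMap.range M.mulVecLin) = q := h
  rw [hr] at hrn
  simp only [Module.finrank_pi, Fintype.card_fin] at hrn
  have hker : LinearMap.ker M.mulVecLin = ⊥ := Submodule.finrank_eq_zero.mp (by omega)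
  have hmem : u ∈ LinearMap.ker M.mulVecLin := by
    simpa [LinearMap.mem_ker, mulVecLin_apply] using hu
  simpa [hker] using hmem

lemma finsler (B : Matrix (Fin p) (Fin n) ℝ) (Ω : Matrix (Fin n) (Fin n) ℝ)
    (hneg : ∀ x : Fin n → ℝ, x ≠ 0 → B *ᵥ x = 0 → x ⬝ᵥ (Ω *ᵥ x) < 0) :
    ∃ ρ : ℝ, 0 < ρ ∧ ∀ x : Fin n → ℝ, x ≠ 0 →
      x ⬝ᵥ (Ω *ᵥ x) < ρ * ((B *ᵥ x) ⬝ᵥ (B *ᵥ x)) := by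
  set f : (Fin n → ℝ) → ℝ := fun x => x ⬝ᵥ (Ω *ᵥ x) with hf_def
  set g : (Fin n → ℝ) → ℝ := fun x => (B *ᵥ x) ⬝ᵥ (B *ᵥ x) with hg_def
  have hf : Continuous f := cont_quad Ω
  have hgq : g = fun x => x ⬝ᵥ ((Bᵀ * B) *ᵥ x) := by
    funext x; rw [hg_def]; rw [← mulVec_mulVec]; exact mulVec_dot B x _
  have hg : Continuous g := hgq ▸ cont_quad (Bᵀ * B)
  have hg0 : ∀ x, 0 ≤ g x := fun x => dot_self_nonneg _
  set S : Set (Fin n → ℝ) := {x | x ⬝ᵥ x = 1} with hS_def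
  have hScl : IsClosed S := isClosed_eq cont_dot_self continuous_const
  have hSsub : S ⊆ Metric.closedBall 0 1 := by
    intro x hx
    rw [Metric.mem_closedBall, dist_zero_right]
    refine (pi_norm_le_iff_of_nonneg zero_le_one).mpr fun i => ?_
    rw [Real.norm_eq_abs, abs_le_one_iff_mul_self_le_one]
    have hx' : ∑ j, x j * x j = 1 := hx
    have hle1 : x i * x i ≤ ∑ j, x j * x j := by
      simpa using Finset.single_le_sum (f := fun j => x j * x j)
        (fun j _ => mul_self_nonneg (x j)) (Finset.mem_univ i)
    linarith
  have hScomp : IsCompact S :=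
    (isCompact_closedBall (0 : Fin n → ℝ) 1).of_isClosed_subset hScl hSsub
  have hSne0 : ∀ x ∈ S, x ≠ 0 := by
    rintro x hx rfl
    have : (0 : Fin n → ℝ) ⬝ᵥ 0 = 1 := hx
    simp at this
  suffices hS : ∃ ρ : ℝ, 0 < ρ ∧ ∀ x ∈ S, f x < ρ * g x by
    obtain ⟨ρ, hρ, h⟩ := hS
    refine ⟨ρ, hρ, fun x hx => ?_⟩
    have hxx : 0 < x ⬝ᵥ x :=
      lt_of_le_of_ne (dot_self_nonneg x) fun h' => hx (dotProduct_self_eq_zero.mp h'.symm)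
    set t : ℝ := Real.sqrt (x ⬝ᵥ x) with ht_def
    have ht : 0 < t := Real.sqrt_pos.mpr hxx
    have htt : t * t = x ⬝ᵥ x := Real.mul_self_sqrt hxx.le
    have hu : t⁻¹ • x ∈ S := by
      show (t⁻¹ • x) ⬝ᵥ (t⁻¹ • x) = 1
      rw [smul_dotProduct, dotProduct_smul, smul_eq_mul, smul_eq_mul, ← htt]
      field_simp
    have hfu := h _ hu
    have hfq : f (t⁻¹ • x) = t⁻¹ * (t⁻¹ * f x) := quad_smul Ω t⁻¹ x
    have hgq' : g (t⁻¹ • x) = t⁻¹ * (t⁻¹ * g x) := by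
      rw [hgq]; exact quad_smul (Bᵀ * B) t⁻¹ x
    rw [hfq, hgq'] at hfu
    have ht2 : 0 < t⁻¹ * t⁻¹ := by positivity
    nlinarith [hfu]
  by_cases hSne : S.Nonempty
  · obtain ⟨x₁, _, hmax⟩ := hScomp.exists_isMaxOn hSne hf.continuousOn
    set C : ℝ := f x₁ with hC_def
    have hC : ∀ x ∈ S, f x ≤ C := fun x hx => hmax hx
    set K : Set (Fin n → ℝ) := S ∩ {x | 0 ≤ f x} with hK_def
    have hKcomp : IsCompact K :=
      hScomp.inter_right (isClosed_le continuous_const hf)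
    by_cases hKne : K.Nonempty
    · obtain ⟨x₀, hx₀K, hmin⟩ := hKcomp.exists_isMinOn hKne hg.continuousOn
      have hx₀S : x₀ ∈ S := hx₀K.1
      have hgx₀ : 0 < g x₀ := by
        rcases (hg0 x₀).lt_or_eq with h' | h'
        · exact h'
        · exfalso
          have hB0 : B *ᵥ x₀ = 0 := dotProduct_self_eq_zero.mp h'.symm
          have := hneg x₀ (hSne0 x₀ hx₀S) hB0
          have h2 := hx₀K.2
          simp only [Set.mem_setOf_eq] at h2
          linarith
      refine ⟨(|C| + 1) / g x₀, by positivity, fun x hxS => ?_⟩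
      by_cases hfx : 0 ≤ f x
      · have hxK : x ∈ K := ⟨hxS, hfx⟩
        have h1 : g x₀ ≤ g x := hmin hxK
        have h2 : (|C| + 1) / g x₀ * g x₀ ≤ (|C| + 1) / g x₀ * g x := by
          have : 0 ≤ (|C| + 1) / g x₀ := by positivity
          nlinarith
        rw [div_mul_cancel₀ _ hgx₀.ne'] at h2
        have := hC x hxS
        have := le_abs_self C
        linarith
      · push_neg at hfx
        have : 0 ≤ (|C| + 1) / g x₀ * g x := by
          have h3 := hg0 x
          positivity
        linarith
    · refine ⟨1, one_pos, fun x hxS => ?_⟩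
      have hfx : f x < 0 := by
        by_contra h'
        push_neg at h'
        exact hKne ⟨x, hxS, h'⟩
      have := hg0 x
      linarith
  · exact ⟨1, one_pos, fun x hx => absurd ⟨x, hx⟩ hSne⟩

end ProjLemAux

/-- projection lemma: for full-column-rank `E`, full-row-rank `H`, and
symmetric `Ω`, there exists `F` with `Ω + EFH + (EFH)ᵀ ≺ 0` iff
`N_{E'}ᵀ Ω N_{E'} ≺ 0` and `N_Hᵀ Ω N_H ≺ 0`, where the columns of `N_{E'}` (resp. `N_H`)
form an orthonormal basis of the null space of `Eᵀ` (resp. `H`). -/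
theorem projection_lemma
    {n m s : ℕ}
    (E : Matrix (Fin n) (Fin m) ℝ) (hErank : E.rank = m) (hmn : m < n)
    (H : Matrix (Fin s) (Fin n) ℝ) (hHrank : H.rank = s) (hsn : s < n)
    (Ω : Matrix (Fin n) (Fin n) ℝ) (hΩ : Ω.IsSymm)
    (NE : Matrix (Fin n) (Fin (n - m)) ℝ)
    (hNE0 : Eᵀ * NE = 0) (hNEorth : NEᵀ * NE = 1)
    (NH : Matrix (Fin n) (Fin (n - s)) ℝ)
    (hNH0 : H * NH = 0) (hNHorth : NHᵀ * NH = 1) :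
    (∃ F : Matrix (Fin m) (Fin s) ℝ,
        (-(Ω + E * F * H + (E * F * H)ᵀ)).PosDef) ↔
      (-(NEᵀ * Ω * NE)).PosDef ∧ (-(NHᵀ * Ω * NH)).PosDef := by
  classical
  have hΩ' : Ωᵀ = Ω := hΩ
  constructor
  · rintro ⟨F, hF⟩
    have hNE0' : NEᵀ * E = 0 := by
      have := congrArg Matrix.transpose hNE0
      simpa using this
    have t2 : NEᵀ * (E * F * H) = 0 := by
      rw [Matrix.mul_assoc E F H, ← Matrix.mul_assoc NEᵀ E (F * H), hNE0', Matrix.zero_mul]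
    have t3 : (E * F * H)ᵀ * NE = 0 := by
      have := congrArg Matrix.transpose t2
      simpa [Matrix.transpose_mul] using this
    have t2' : (E * F * H) * NH = 0 := by
      rw [Matrix.mul_assoc (E * F) H NH, hNH0, Matrix.mul_zero]
    have t3' : NHᵀ * (E * F * H)ᵀ = 0 := by
      have := congrArg Matrix.transpose t2'
      simpa [Matrix.transpose_mul] using this
    constructor
    · have hmat : NEᵀ * (Ω + E * F * H + (E * F * H)ᵀ) * NE = NEᵀ * Ω * NE := by
        rw [Matrix.mul_add, Matrix.mul_add, t2, Matrix.add_mul, Matrix.add_mul,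
          Matrix.zero_mul, Matrix.mul_assoc NEᵀ (E * F * H)ᵀ NE, t3, Matrix.mul_zero]
        simp
      refine Matrix.PosDef.of_dotProduct_mulVec_pos ?_ (fun c hc => ?_)
      · rw [Matrix.IsHermitian, conjTranspose_eq_transpose_of_trivial]
        rw [transpose_neg, Matrix.transpose_mul, Matrix.transpose_mul,
          transpose_transpose, hΩ', Matrix.mul_assoc]
      · have hNEc : NE *ᵥ c ≠ 0 := by
          intro h0
          apply hc
          have hcc : NEᵀ *ᵥ (NE *ᵥ c) = c := by rw [mulVec_mulVec, hNEorth, one_mulVec]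
          rw [h0, mulVec_zero] at hcc; exact hcc.symm
        have hpos := hF.dotProduct_mulVec_pos hNEc
        have hstar1 : star (NE *ᵥ c) = NE *ᵥ c := by ext i; simp
        have hstar2 : star c = c := by ext i; simp
        rw [hstar1] at hpos
        rw [hstar2]
        have hneg : -(NEᵀ * Ω * NE) = NEᵀ * (-(Ω + E * F * H + (E * F * H)ᵀ)) * NE := by
          rw [Matrix.mul_neg, Matrix.neg_mul, hmat]
        rw [hneg, ProjLemAux.dot_sandwich]
        exact hpos
    · have hmat : NHᵀ * (Ω + E * F * H + (E * F * H)ᵀ) * NH = NHᵀ * Ω * NH := by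
        rw [Matrix.mul_add, Matrix.mul_add, Matrix.add_mul, Matrix.add_mul,
          Matrix.mul_assoc NHᵀ (E * F * H) NH, t2', Matrix.mul_zero, t3',
          Matrix.zero_mul]
        simp
      refine Matrix.PosDef.of_dotProduct_mulVec_pos ?_ (fun c hc => ?_)
      · rw [Matrix.IsHermitian, conjTranspose_eq_transpose_of_trivial]
        rw [transpose_neg, Matrix.transpose_mul, Matrix.transpose_mul,
          transpose_transpose, hΩ', Matrix.mul_assoc]
      · have hNHc : NH *ᵥ c ≠ 0 := by
          intro h0
          apply hc
          have hcc : NHᵀ *ᵥ (NH *ᵥ c) = c := by rw [mulVec_mulVec, hNHorth, one_mulVec]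
          rw [h0, mulVec_zero] at hcc; exact hcc.symm
        have hpos := hF.dotProduct_mulVec_pos hNHc
        have hstar1 : star (NH *ᵥ c) = NH *ᵥ c := by ext i; simp
        have hstar2 : star c = c := by ext i; simp
        rw [hstar1] at hpos
        rw [hstar2]
        have hneg : -(NHᵀ * Ω * NH) = NHᵀ * (-(Ω + E * F * H + (E * F * H)ᵀ)) * NH := by
          rw [Matrix.mul_neg, Matrix.neg_mul, hmat]
        rw [hneg, ProjLemAux.dot_sandwich]
        exact hpos
  · rintro ⟨hNEpd, hNHpd⟩
    have hkerE : ∀ x : Fin n → ℝ, x ≠ 0 → Eᵀ *ᵥ x = 0 → x ⬝ᵥ (Ω *ᵥ x) < 0 := by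
      intro x hx h0
      obtain ⟨c, hc⟩ := ProjLemAux.range_ker Eᵀ (by rw [Matrix.rank_transpose]; exact hErank)
        NE hNE0 hNEorth (by omega) x h0
      have hc0 : c ≠ 0 := by rintro rfl; rw [mulVec_zero] at hc; exact hx hc.symm
      have hpos := hNEpd.dotProduct_mulVec_pos hc0
      have hstar2 : star c = c := by ext i; simp
      rw [hstar2, neg_mulVec, dotProduct_neg] at hpos
      have hsand := ProjLemAux.dot_sandwich NE Ω c
      rw [hc] at hsand
      rw [hsand] at hpos
      linarith
    have hkerH : ∀ y : Fin n → ℝ, y ≠ 0 → H *ᵥ y = 0 → y ⬝ᵥ (Ω *ᵥ y) < 0 := by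
      intro x hx h0
      obtain ⟨c, hc⟩ := ProjLemAux.range_ker H hHrank NH hNH0 hNHorth (by omega) x h0
      have hc0 : c ≠ 0 := by rintro rfl; rw [mulVec_zero] at hc; exact hx hc.symm
      have hpos := hNHpd.dotProduct_mulVec_pos hc0
      have hstar2 : star c = c := by ext i; simp
      rw [hstar2, neg_mulVec, dotProduct_neg] at hpos
      have hsand := ProjLemAux.dot_sandwich NH Ω c
      rw [hc] at hsand
      rw [hsand] at hpos
      linarith
    obtain ⟨ρ, hρ, hb⟩ := ProjLemAux.finsler Eᵀ Ω hkerE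
    set A := ρ • (E * Eᵀ) - Ω with hA_def
    have hAq : ∀ v : Fin n → ℝ,
        v ⬝ᵥ (A *ᵥ v) = ρ * ((Eᵀ *ᵥ v) ⬝ᵥ (Eᵀ *ᵥ v)) - v ⬝ᵥ (Ω *ᵥ v) := by
      intro v
      rw [hA_def, sub_mulVec, dotProduct_sub, smul_mulVec, dotProduct_smul,
        smul_eq_mul, ProjLemAux.dot_EEt]
    have hAsym : Aᵀ = A := by
      rw [hA_def, transpose_sub, transpose_smul, Matrix.transpose_mul,
        transpose_transpose, hΩ']
    have hApd : A.PosDef := by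
      refine Matrix.PosDef.of_dotProduct_mulVec_pos ?_ (fun v hv => ?_)
      · rw [Matrix.IsHermitian, conjTranspose_eq_transpose_of_trivial, hAsym]
      · have hstar2 : star v = v := by ext i; simp
        rw [hstar2, hAq]
        have := hb v hv
        linarith
    have hAdet : IsUnit A.det := hApd.det_pos.ne'.isUnit
    set Φ := A⁻¹ with hΦ_def
    have hΦpd : Φ.PosDef := hApd.inv
    have hΦsym : Φᵀ = Φ := by rw [hΦ_def, Matrix.transpose_nonsing_inv, hAsym]
    have hAΦ : A * Φ = 1 := Matrix.mul_nonsing_inv A hAdet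
    have hBsym : (H * Φ * Hᵀ)ᵀ = H * Φ * Hᵀ := by
      rw [Matrix.transpose_mul, Matrix.transpose_mul, transpose_transpose, hΦsym,
        Matrix.mul_assoc]
    have hBpd : (H * Φ * Hᵀ).PosDef := by
      refine Matrix.PosDef.of_dotProduct_mulVec_pos ?_ (fun u hu => ?_)
      · rw [Matrix.IsHermitian, conjTranspose_eq_transpose_of_trivial, hBsym]
      · have h1 : Hᵀ *ᵥ u ≠ 0 := fun h =>
          hu (ProjLemAux.mulVec_inj Hᵀ (by rw [Matrix.rank_transpose]; exact hHrank) h)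
        have hpos := hΦpd.dotProduct_mulVec_pos h1
        have hstar2 : star (Hᵀ *ᵥ u) = Hᵀ *ᵥ u := by ext i; simp
        have hstar3 : star u = u := by ext i; simp
        rw [hstar2] at hpos
        rw [hstar3]
        have heq : H * Φ * Hᵀ = Hᵀᵀ * Φ * Hᵀ := by rw [transpose_transpose]
        rw [heq, ProjLemAux.dot_sandwich]
        exact hpos
    have hBdet : IsUnit (H * Φ * Hᵀ).det := hBpd.det_pos.ne'.isUnit
    set W := (H * Φ * Hᵀ)⁻¹ with hW_def
    have hWsym : Wᵀ = W := by rw [hW_def, Matrix.transpose_nonsing_inv, hBsym]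
    have hBW : H * Φ * Hᵀ * W = 1 := Matrix.mul_nonsing_inv _ hBdet
    set G := Hᵀ * W * H with hG_def
    have hGsym : Gᵀ = G := by
      rw [hG_def, Matrix.transpose_mul, Matrix.transpose_mul, transpose_transpose,
        hWsym, Matrix.mul_assoc]
    have hHΦG : H * Φ * G = H := by
      rw [hG_def]
      calc H * Φ * (Hᵀ * W * H) = (H * Φ * Hᵀ * W) * H := by
            simp only [Matrix.mul_assoc]
        _ = H := by rw [hBW, Matrix.one_mul]
    have hGΦG : G * Φ * G = G := by
      rw [hG_def]
      calc Hᵀ * W * H * Φ * (Hᵀ * W * H) = Hᵀ * W * ((H * Φ * Hᵀ * W) * H) := by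
            simp only [Matrix.mul_assoc]
        _ = Hᵀ * W * H := by rw [hBW, Matrix.one_mul]
    refine ⟨(-ρ) • (Eᵀ * Φ * Hᵀ * W), ?_⟩
    set F := (-ρ) • (Eᵀ * Φ * Hᵀ * W) with hF_def
    have hEFH : E * F * H = (-ρ) • (E * Eᵀ * (Φ * G)) := by
      rw [hF_def, hG_def, Matrix.mul_smul, Matrix.smul_mul]
      congr 1
      simp only [Matrix.mul_assoc]
    have key : ∀ x : Fin n → ℝ, x ≠ 0 →
        x ⬝ᵥ ((Ω + E * F * H + (E * F * H)ᵀ) *ᵥ x) < 0 := by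
      intro x hx
      set z : Fin n → ℝ := Φ *ᵥ (G *ᵥ x) with hz_def
      set y : Fin n → ℝ := x - z with hy_def
      have hxyz : x = y + z := by rw [hy_def, sub_add_cancel]
      have hHy : H *ᵥ y = 0 := by
        rw [hy_def, mulVec_sub, hz_def, mulVec_mulVec, mulVec_mulVec, hHΦG, sub_self]
      have hAz : A *ᵥ z = G *ᵥ x := by
        rw [hz_def, mulVec_mulVec, hAΦ, one_mulVec]
      have hyGx : y ⬝ᵥ (G *ᵥ x) = 0 := by
        rw [hy_def, sub_dotProduct]
        have hzg : z ⬝ᵥ (G *ᵥ x) = x ⬝ᵥ (G *ᵥ x) := by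
          rw [hz_def, mulVec_mulVec, ProjLemAux.mulVec_dot, mulVec_mulVec]
          have hmid : (Φ * G)ᵀ * G = G := by
            rw [Matrix.transpose_mul, hΦsym, hGsym]; exact hGΦG
          rw [hmid]
        rw [hzg, sub_self]
      have hyz : y ⬝ᵥ (Ω *ᵥ z) = ρ * (y ⬝ᵥ ((E * Eᵀ) *ᵥ z)) := by
        have h0 : y ⬝ᵥ (A *ᵥ z) = 0 := by rw [hAz]; exact hyGx
        rw [hA_def, sub_mulVec, dotProduct_sub, smul_mulVec, dotProduct_smul,
          smul_eq_mul] at h0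
        linarith
      have e1 : x ⬝ᵥ ((Ω + E * F * H + (E * F * H)ᵀ) *ᵥ x)
          = x ⬝ᵥ (Ω *ᵥ x) + 2 * ((-ρ) * (x ⬝ᵥ ((E * Eᵀ) *ᵥ z))) := by
        rw [add_mulVec, add_mulVec, dotProduct_add, dotProduct_add]
        have h3 : x ⬝ᵥ ((E * F * H)ᵀ *ᵥ x) = x ⬝ᵥ ((E * F * H) *ᵥ x) := by
          rw [← ProjLemAux.mulVec_dot (E * F * H) x x, dotProduct_comm]
        have h2 : x ⬝ᵥ ((E * F * H) *ᵥ x) = (-ρ) * (x ⬝ᵥ ((E * Eᵀ) *ᵥ z)) := by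
          rw [hEFH, smul_mulVec, dotProduct_smul, smul_eq_mul]
          congr 2
          rw [hz_def, mulVec_mulVec, mulVec_mulVec]
          simp only [Matrix.mul_assoc]
        rw [h3, h2]; ring
      have e2 : x ⬝ᵥ (Ω *ᵥ x)
          = y ⬝ᵥ (Ω *ᵥ y) + 2 * (y ⬝ᵥ (Ω *ᵥ z)) + z ⬝ᵥ (Ω *ᵥ z) := by
        have hsymc : z ⬝ᵥ (Ω *ᵥ y) = y ⬝ᵥ (Ω *ᵥ z) := by
          rw [dotProduct_comm, ProjLemAux.mulVec_dot, hΩ']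
        conv_lhs => rw [hxyz]
        rw [mulVec_add, dotProduct_add, add_dotProduct, add_dotProduct]
        linarith
      have e3 : x ⬝ᵥ ((E * Eᵀ) *ᵥ z)
          = y ⬝ᵥ ((E * Eᵀ) *ᵥ z) + z ⬝ᵥ ((E * Eᵀ) *ᵥ z) := by
        conv_lhs => rw [hxyz]
        rw [add_dotProduct]
      have hzq : z ⬝ᵥ ((E * Eᵀ) *ᵥ z) = (Eᵀ *ᵥ z) ⬝ᵥ (Eᵀ *ᵥ z) := ProjLemAux.dot_EEt E z
      have h7 : y ⬝ᵥ (Ω *ᵥ y) ≤ 0 := by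
        by_cases hy0 : y = 0
        · rw [hy0]; simp
        · exact (hkerH y hy0 hHy).le
      by_cases hz0 : z = 0
      · have hy0 : y ≠ 0 := by rw [hy_def, hz0, sub_zero]; exact hx
        have hlt := hkerH y hy0 hHy
        have hz1 : z ⬝ᵥ (Ω *ᵥ z) = 0 := by rw [hz0]; simp
        have hz2 : y ⬝ᵥ (Ω *ᵥ z) = 0 := by rw [hz0]; simp
        have hz3 : x ⬝ᵥ ((E * Eᵀ) *ᵥ z) = 0 := by rw [hz0]; simp
        rw [e1, e2, hz1, hz2, hz3]
        linarith
      · have h5 := hb z hz0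
        have h6 : 0 ≤ (Eᵀ *ᵥ z) ⬝ᵥ (Eᵀ *ᵥ z) := ProjLemAux.dot_self_nonneg _
        have h8 : 0 ≤ ρ * ((Eᵀ *ᵥ z) ⬝ᵥ (Eᵀ *ᵥ z)) := mul_nonneg hρ.le h6
        rw [e1, e2, e3, hyz, hzq]
        nlinarith
    refine Matrix.PosDef.of_dotProduct_mulVec_pos ?_ (fun x hx => ?_)
    · rw [Matrix.IsHermitian, conjTranspose_eq_transpose_of_trivial, transpose_neg,
        transpose_add, transpose_add, transpose_transpose, hΩ']
      congr 1
      abel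
    · have hstarx : star x = x := by ext i; simp
      rw [hstarx, neg_mulVec, dotProduct_neg]
      have := key x hx
      linarith
end

section
/- (Synthesis of a feedback GCSC.) Let δ > 0, x0 ∈ ℝⁿ, let Q_α ⪰ 0 with positive semidefinite square root √Q_α and R_α ≻ 0 with positive definite square root √R_α. Suppose P ∈ ℝ^{n×n} is symmetric positive definite with the 2×2 block matrix [[δ, x0ᵀ],[x0, P⁻¹]] positive definite, and suppose F ∈ ℝ^{m×n} satisfies the block LMI [[(A+BF)ᵀP + P(A+BF), (√Q_α)ᵀ, (√R_α F)ᵀ],[√Q_α, −I_n, 0],[√R_α F, 0, −I_m]] ≺ 0 together with the structural constraint SC2: G_iF(I_n − C_iᵀ(C_iC_iᵀ)⁻¹C_i) = 0 for all i. Then A + BF is Hurwitz and the weighted cost satisfies J_α(F,x0) = ∫₀^∞ x(t)ᵀ(Q_α + FᵀR_αF)x(t) dt < δ, where x(t) = exp(t(A+BF))x0. -/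
open Matrix MeasureTheory

attribute [local instance] Matrix.linftyOpNormedAddCommGroup Matrix.linftyOpNormedRing
  Matrix.linftyOpNormedAlgebra Matrix.linftyOpNormedSpace

namespace GCSCAux

variable {n : ℕ}

lemma mulVec_dot (M : Matrix (Fin n) (Fin n) ℝ) (a b : Fin n → ℝ) :
    (M *ᵥ a) ⬝ᵥ b = a ⬝ᵥ (Mᵀ *ᵥ b) := by
  rw [Matrix.dotProduct_mulVec, Matrix.vecMul_transpose]

lemma re_quad (S : Matrix (Fin n) (Fin n) ℝ) (v : Fin n → ℂ) :
    (star v ⬝ᵥ ((S.map (algebraMap ℝ ℂ)) *ᵥ v)).re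
      = (fun i => (v i).re) ⬝ᵥ (S *ᵥ fun i => (v i).re)
        + (fun i => (v i).im) ⬝ᵥ (S *ᵥ fun i => (v i).im) := by
  simp only [dotProduct, Matrix.mulVec, Matrix.map_apply, Pi.star_apply,
    Finset.mul_sum, Complex.re_sum, ← Finset.sum_add_distrib]
  refine Finset.sum_congr rfl fun i _ => ?_
  refine Finset.sum_congr rfl fun j _ => ?_
  simp only [Complex.mul_re, Complex.mul_im, RCLike.star_def, Complex.conj_re,
    Complex.conj_im, Complex.coe_algebraMap, Complex.ofReal_re, Complex.ofReal_im]
  ring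

lemma quad_re_pos {S : Matrix (Fin n) (Fin n) ℝ}
    (hS : ∀ x : Fin n → ℝ, x ≠ 0 → 0 < x ⬝ᵥ (S *ᵥ x))
    (v : Fin n → ℂ) (hv : v ≠ 0) :
    0 < (star v ⬝ᵥ ((S.map (algebraMap ℝ ℂ)) *ᵥ v)).re := by
  have hS' : ∀ x : Fin n → ℝ, 0 ≤ x ⬝ᵥ (S *ᵥ x) := by
    intro x
    by_cases hx : x = 0
    · simp [hx]
    · exact (hS x hx).le
  rw [re_quad]
  rcases Classical.em ((fun i => (v i).re) = 0) with h | h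
  · have him : (fun i => (v i).im) ≠ 0 := by
      intro h'
      apply hv
      funext i
      have h1 := congrFun h i
      have h2 := congrFun h' i
      exact Complex.ext h1 h2
    have := hS _ him
    have := hS' (fun i => (v i).re)
    linarith
  · have := hS _ h
    have := hS' (fun i => (v i).im)
    linarith

lemma map_mulVec_star (A : Matrix (Fin n) (Fin n) ℝ) (v : Fin n → ℂ) :
    (A.map (algebraMap ℝ ℂ)) *ᵥ (star v) = star ((A.map (algebraMap ℝ ℂ)) *ᵥ v) := by
  funext i
  simp only [Matrix.mulVec, dotProduct, Matrix.map_apply, Pi.star_apply]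
  rw [star_sum]
  refine Finset.sum_congr rfl fun j _ => ?_
  simp [RCLike.star_def, Complex.conj_ofReal, _root_.map_mul]

lemma exists_eigvec {M : Matrix (Fin n) (Fin n) ℂ} {μ : ℂ} (h : μ ∈ spectrum ℂ M) :
    ∃ v : Fin n → ℂ, v ≠ 0 ∧ M *ᵥ v = μ • v := by
  rw [spectrum.mem_iff] at h
  have hdet : (algebraMap ℂ (Matrix (Fin n) (Fin n) ℂ) μ - M).det = 0 := by
    by_contra hd
    exact h ((Matrix.isUnit_iff_isUnit_det _).mpr (isUnit_iff_ne_zero.mpr hd))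
  obtain ⟨v, hv0, hv⟩ := (Matrix.exists_mulVec_eq_zero_iff).mpr hdet
  refine ⟨v, hv0, ?_⟩
  rw [Matrix.sub_mulVec] at hv
  have : (algebraMap ℂ (Matrix (Fin n) (Fin n) ℂ) μ) *ᵥ v = μ • v := by
    rw [Algebra.algebraMap_eq_smul_one, Matrix.smul_mulVec, Matrix.one_mulVec]
  rw [this] at hv
  exact (sub_eq_zero.mp hv).symm

/-- `M ↦ M *ᵥ x0` as a linear map. -/
def mulVecRight (x0 : Fin n → ℝ) : Matrix (Fin n) (Fin n) ℝ →ₗ[ℝ] (Fin n → ℝ) where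
  toFun M := M *ᵥ x0
  map_add' M N := Matrix.add_mulVec M N x0
  map_smul' c M := Matrix.smul_mulVec c M x0

lemma hasDerivAt_traj (Acl : Matrix (Fin n) (Fin n) ℝ) (x0 : Fin n → ℝ) (t : ℝ) :
    HasDerivAt (traj Acl x0) (Acl *ᵥ traj Acl x0 t) t := by
  have h1 : HasDerivAt (fun u : ℝ => NormedSpace.exp (u • Acl))
      (Acl * NormedSpace.exp (t • Acl)) t := hasDerivAt_exp_smul_const' Acl t
  have h2 := ((mulVecRight x0).toContinuousLinearMap.hasFDerivAt).comp_hasDerivAt t h1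
  refine h2.congr_deriv ?_
  show (Acl * NormedSpace.exp (t • Acl)) *ᵥ x0 = Acl *ᵥ (NormedSpace.exp (t • Acl) *ᵥ x0)
  rw [Matrix.mulVec_mulVec]

lemma hasDerivAt_apply' {f : ℝ → Fin n → ℝ} {f' : Fin n → ℝ} {t : ℝ}
    (hf : HasDerivAt f f' t) (i : Fin n) :
    HasDerivAt (fun u => f u i) (f' i) t :=
  ((ContinuousLinearMap.proj (R := ℝ) (φ := fun _ : Fin n => ℝ) i).hasFDerivAt).comp_hasDerivAt t hf

lemma hasDerivAt_quad (M : Matrix (Fin n) (Fin n) ℝ) {x : ℝ → Fin n → ℝ} {x' : Fin n → ℝ} {t : ℝ}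
    (hx : HasDerivAt x x' t) :
    HasDerivAt (fun u => x u ⬝ᵥ (M *ᵥ x u)) (x' ⬝ᵥ (M *ᵥ x t) + x t ⬝ᵥ (M *ᵥ x')) t := by
  have hMx : HasDerivAt (fun u => M *ᵥ x u) (M *ᵥ x') t :=
    ((M.mulVecLin.toContinuousLinearMap.hasFDerivAt).comp_hasDerivAt t hx).congr_deriv rfl
  have h : HasDerivAt (fun u => ∑ i, x u i * (M *ᵥ x u) i)
      (∑ i, (x' i * (M *ᵥ x t) i + x t i * (M *ᵥ x') i)) t := by
    refine HasDerivAt.fun_sum fun i _ => ?_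
    exact (hasDerivAt_apply' hx i).mul (hasDerivAt_apply' hMx i)
  simpa [dotProduct, Finset.sum_add_distrib] using h

end GCSCAux

set_option maxHeartbeats 1000000 in
/-- synthesis of a feedback GCSC: if `P ≻ 0` satisfies the Schur-complement
level LMI `[[δ, x0ᵀ], [x0, P⁻¹]] ≻ 0` and `F` satisfies the 3×3 block guaranteed-cost
LMI together with the structural constraint SC2, then `A + BF` is Hurwitz and
`J_α(F, x0) < δ`. -/
theorem gcsc_synthesis
    {n N : ℕ} {mdim sdim : Fin N → ℕ}
    (A : Matrix (Fin n) (Fin n) ℝ)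
    (B : Matrix (Fin n) ((j : Fin N) × Fin (mdim j)) ℝ)
    (C : (i : Fin N) → Matrix (Fin (sdim i)) (Fin n) ℝ)
    (hCrank : ∀ i, (C i).rank = sdim i) (hCn : ∀ i, sdim i ≤ n)
    (δ : ℝ) (hδ : 0 < δ) (x0 : Fin n → ℝ)
    (Qα : Matrix (Fin n) (Fin n) ℝ) (hQα : Qα.PosSemidef)
    (sqQ : Matrix (Fin n) (Fin n) ℝ) (hsqQ : sqQ.PosSemidef) (hsqQ2 : sqQ * sqQ = Qα)
    (Rα : Matrix ((j : Fin N) × Fin (mdim j)) ((j : Fin N) × Fin (mdim j)) ℝ)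
    (hRα : Rα.PosDef)
    (sqR : Matrix ((j : Fin N) × Fin (mdim j)) ((j : Fin N) × Fin (mdim j)) ℝ)
    (hsqR : sqR.PosDef) (hsqR2 : sqR * sqR = Rα)
    (P : Matrix (Fin n) (Fin n) ℝ) (hP : P.PosDef)
    (hlevel : (Matrix.fromBlocks
        (Matrix.of fun (_ : Fin 1) (_ : Fin 1) => δ)
        (Matrix.of fun (_ : Fin 1) j => x0 j)
        (Matrix.of fun i (_ : Fin 1) => x0 i)
        P⁻¹).PosDef)
    (F : Matrix ((j : Fin N) × Fin (mdim j)) (Fin n) ℝ)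
    (hLMI : (-(Matrix.fromBlocks
        ((A + B * F)ᵀ * P + P * (A + B * F))
        (Matrix.fromCols sqQᵀ (sqR * F)ᵀ)
        (Matrix.fromRows sqQ (sqR * F))
        (Matrix.fromBlocks (-1) 0 0 (-1)))).PosDef)
    (hSC2 : SC2 C F) :
    IsHurwitz (A + B * F) ∧
      costJ (A + B * F) (Qα + Fᵀ * Rα * F) x0 < δ := by
  classical
  set Acl := A + B * F with hAcldef
  set M' := Qα + Fᵀ * Rα * F with hM'def
  set L := Aclᵀ * P + P * Acl with hLdef
  have hsqQT : sqQᵀ = sqQ := by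
    rw [← Matrix.conjTranspose_eq_transpose_of_trivial]; exact hsqQ.1
  have hsqRT : sqRᵀ = sqR := by
    rw [← Matrix.conjTranspose_eq_transpose_of_trivial]; exact hsqR.1
  -- the key strict quadratic inequality extracted from the 3×3 LMI
  have key : ∀ x : Fin n → ℝ, x ≠ 0 →
      x ⬝ᵥ (M' *ᵥ x) < -(x ⬝ᵥ (L *ᵥ x)) := by
    intro x hx
    set y : Fin n ⊕ ((j : Fin N) × Fin (mdim j)) → ℝ :=
      Sum.elim (sqQ *ᵥ x) ((sqR * F) *ᵥ x) with hy
    have hv : (Sum.elim x y : Fin n ⊕ (Fin n ⊕ ((j : Fin N) × Fin (mdim j))) → ℝ) ≠ 0 := by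
      intro h
      exact hx (funext fun i => congrFun h (Sum.inl i))
    have hpos := hLMI.dotProduct_mulVec_pos hv
    rw [star_trivial] at hpos
    rw [Matrix.neg_mulVec, dotProduct_neg, Matrix.fromBlocks_mulVec] at hpos
    simp only [Sum.elim_comp_inl, Sum.elim_comp_inr] at hpos
    have hD : (Matrix.fromBlocks (-1 : Matrix (Fin n) (Fin n) ℝ) 0 0
        (-1 : Matrix ((j : Fin N) × Fin (mdim j)) ((j : Fin N) × Fin (mdim j)) ℝ)) *ᵥ y = -y := by
      rw [hy, Matrix.fromBlocks_mulVec]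
      funext i
      cases i <;>
        simp [Matrix.neg_mulVec, Matrix.one_mulVec]
    have hLo : Matrix.fromRows sqQ (sqR * F) *ᵥ x = y := by
      rw [hy, Matrix.fromRows_mulVec]
    rw [hD, hLo] at hpos
    have hU : Matrix.fromCols sqQᵀ (sqR * F)ᵀ *ᵥ y
        = Qα *ᵥ x + (Fᵀ * Rα * F) *ᵥ x := by
      rw [hy, Matrix.fromCols_mulVec_sumElim, Matrix.mulVec_mulVec, Matrix.mulVec_mulVec,
        hsqQT, hsqQ2]
      congr 1
      rw [Matrix.transpose_mul, hsqRT, ← hsqR2]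
      rw [Matrix.mul_assoc, ← Matrix.mul_assoc sqR sqR F, ← Matrix.mul_assoc]
    rw [hU] at hpos
    rw [sumElim_dotProduct_sumElim, add_neg_cancel, dotProduct_zero, add_zero,
      dotProduct_add, dotProduct_add] at hpos
    have hMx : x ⬝ᵥ (M' *ᵥ x) = x ⬝ᵥ (Qα *ᵥ x) + x ⬝ᵥ ((Fᵀ * Rα * F) *ᵥ x) := by
      rw [hM'def, Matrix.add_mulVec, dotProduct_add]
    linarith
  -- positive semidefiniteness of the cost matrix
  have hFRF : (Fᵀ * Rα * F).PosSemidef := by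
    have h := hRα.posSemidef.conjTranspose_mul_mul_same F
    rwa [Matrix.conjTranspose_eq_transpose_of_trivial] at h
  have hM'psd : M'.PosSemidef := hQα.add hFRF
  have hM'nn : ∀ x : Fin n → ℝ, 0 ≤ x ⬝ᵥ (M' *ᵥ x) := by
    intro x
    simpa using hM'psd.dotProduct_mulVec_nonneg x
  have hWpos : ∀ x : Fin n → ℝ, x ≠ 0 → 0 < x ⬝ᵥ ((-L) *ᵥ x) := by
    intro x hx
    rw [Matrix.neg_mulVec, dotProduct_neg]
    have h1 := key x hx
    have h2 := hM'nn x
    linarith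
  have hPq : ∀ x : Fin n → ℝ, x ≠ 0 → 0 < x ⬝ᵥ (P *ᵥ x) := by
    intro x hx
    simpa using hP.dotProduct_mulVec_pos hx
  -- level set inequality
  have hPinv : P⁻¹ * P = 1 := Matrix.nonsing_inv_mul P (isUnit_iff_ne_zero.mpr hP.det_pos.ne')
  have hx0P : x0 ⬝ᵥ (P *ᵥ x0) < δ := by
    have hv : (Sum.elim (fun _ : Fin 1 => (1:ℝ)) (-(P *ᵥ x0)) : Fin 1 ⊕ Fin n → ℝ) ≠ 0 := by
      intro h
      simpa using congrFun h (Sum.inl 0)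
    have hpos := hlevel.dotProduct_mulVec_pos hv
    rw [star_trivial, Matrix.fromBlocks_mulVec] at hpos
    simp only [Sum.elim_comp_inl, Sum.elim_comp_inr] at hpos
    have h22 : P⁻¹ *ᵥ (-(P *ᵥ x0)) = -x0 := by
      rw [Matrix.mulVec_neg, Matrix.mulVec_mulVec, hPinv, Matrix.one_mulVec]
    have h21 : (Matrix.of fun i (_ : Fin 1) => x0 i) *ᵥ (fun _ : Fin 1 => (1:ℝ)) = x0 := by
      funext i
      simp [Matrix.mulVec, dotProduct]
    rw [h22, h21] at hpos
    rw [sumElim_dotProduct_sumElim, add_neg_cancel, dotProduct_zero, add_zero] at hpos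
    have h11 : ((Matrix.of fun (_ : Fin 1) (_ : Fin 1) => δ) *ᵥ (fun _ : Fin 1 => (1:ℝ)))
        = fun _ : Fin 1 => δ := by
      funext i
      simp [Matrix.mulVec, dotProduct]
    have h12 : ((Matrix.of fun (_ : Fin 1) j => x0 j) *ᵥ (-(P *ᵥ x0)))
        = fun _ : Fin 1 => -(x0 ⬝ᵥ (P *ᵥ x0)) := by
      funext i
      simp [Matrix.mulVec, dotProduct]
    rw [h11, h12] at hpos
    simp only [dotProduct, Fin.sum_univ_one, Pi.add_apply, one_mul] at hpos
    simpa [dotProduct] using hpos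
  constructor
  · -- Hurwitz
    intro μ hμ
    obtain ⟨v, hv0, hv⟩ := GCSCAux.exists_eigvec hμ
    have hq : 0 < (star v ⬝ᵥ ((P.map (algebraMap ℝ ℂ)) *ᵥ v)).re :=
      GCSCAux.quad_re_pos hPq v hv0
    have hW : 0 < (star v ⬝ᵥ (((-L).map (algebraMap ℝ ℂ)) *ᵥ v)).re :=
      GCSCAux.quad_re_pos hWpos v hv0
    have hiden : star v ⬝ᵥ ((L.map (algebraMap ℝ ℂ)) *ᵥ v)
        = ((starRingEnd ℂ) μ + μ) * (star v ⬝ᵥ ((P.map (algebraMap ℝ ℂ)) *ᵥ v)) := by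
      have hmap : L.map (algebraMap ℝ ℂ)
          = ((Acl.map (algebraMap ℝ ℂ))ᵀ * (P.map (algebraMap ℝ ℂ)))
            + ((P.map (algebraMap ℝ ℂ)) * (Acl.map (algebraMap ℝ ℂ))) := by
        rw [hLdef, Matrix.map_add, Matrix.map_mul, Matrix.map_mul, Matrix.transpose_map]
        exact fun a₁ a₂ => map_add (algebraMap ℝ ℂ) a₁ a₂
      rw [hmap, Matrix.add_mulVec, dotProduct_add]
      have t1 : star v ⬝ᵥ (((Acl.map (algebraMap ℝ ℂ))ᵀ * (P.map (algebraMap ℝ ℂ))) *ᵥ v)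
          = (starRingEnd ℂ) μ * (star v ⬝ᵥ ((P.map (algebraMap ℝ ℂ)) *ᵥ v)) := by
        rw [← Matrix.mulVec_mulVec]
        rw [Matrix.dotProduct_mulVec, Matrix.vecMul_transpose, GCSCAux.map_mulVec_star, hv]
        rw [star_smul, smul_dotProduct]
        rfl
      have t2 : star v ⬝ᵥ (((P.map (algebraMap ℝ ℂ)) * (Acl.map (algebraMap ℝ ℂ))) *ᵥ v)
          = μ * (star v ⬝ᵥ ((P.map (algebraMap ℝ ℂ)) *ᵥ v)) := by
        rw [← Matrix.mulVec_mulVec, hv, Matrix.mulVec_smul, dotProduct_smul]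
        rfl
      rw [t1, t2]
      ring
    have hre : (star v ⬝ᵥ ((L.map (algebraMap ℝ ℂ)) *ᵥ v)).re
        = 2 * μ.re * (star v ⬝ᵥ ((P.map (algebraMap ℝ ℂ)) *ᵥ v)).re := by
      rw [hiden, Complex.mul_re]
      have h1 : ((starRingEnd ℂ) μ + μ).re = 2 * μ.re := by
        simp [Complex.add_re]; ring
      have h2 : ((starRingEnd ℂ) μ + μ).im = 0 := by
        simp [Complex.add_im]
      rw [h1, h2]; ring
    have hneg : (star v ⬝ᵥ ((L.map (algebraMap ℝ ℂ)) *ᵥ v)).re < 0 := by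
      have hmapneg : (-L).map (algebraMap ℝ ℂ) = -(L.map (algebraMap ℝ ℂ)) := by
        ext i j; simp
      rw [hmapneg, Matrix.neg_mulVec, dotProduct_neg, Complex.neg_re] at hW
      linarith
    rw [hre] at hneg
    nlinarith
  · -- cost bound
    set x := traj Acl x0 with hxdef
    have hx' : ∀ t : ℝ, HasDerivAt x (Acl *ᵥ x t) t := fun t =>
      GCSCAux.hasDerivAt_traj Acl x0 t
    have hxc : Continuous x := by
      rw [continuous_iff_continuousAt]
      exact fun t => (hx' t).continuousAt
    set g : ℝ → ℝ := fun t => x t ⬝ᵥ (M' *ᵥ x t) with hgdef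
    set V : ℝ → ℝ := fun t => x t ⬝ᵥ (P *ᵥ x t) with hVdef
    set W : ℝ → ℝ := fun t => x t ⬝ᵥ (L *ᵥ x t) with hWdef
    have hquadc : ∀ M : Matrix (Fin n) (Fin n) ℝ, Continuous fun t => x t ⬝ᵥ (M *ᵥ x t) := by
      intro M
      simp only [dotProduct, Matrix.mulVec]
      refine continuous_finset_sum _ fun i _ => ?_
      exact ((continuous_apply i).comp hxc).mul
        (continuous_finset_sum _ fun j _ => continuous_const.mul ((continuous_apply j).comp hxc))
    have hVderiv : ∀ t : ℝ, HasDerivAt V (W t) t := by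
      intro t
      have h := GCSCAux.hasDerivAt_quad P (hx' t)
      have heq : (Acl *ᵥ x t) ⬝ᵥ (P *ᵥ x t) + x t ⬝ᵥ (P *ᵥ (Acl *ᵥ x t)) = W t := by
        show (Acl *ᵥ x t) ⬝ᵥ (P *ᵥ x t) + x t ⬝ᵥ (P *ᵥ (Acl *ᵥ x t)) = x t ⬝ᵥ (L *ᵥ x t)
        rw [GCSCAux.mulVec_dot Acl (x t) (P *ᵥ x t), hLdef,
          Matrix.add_mulVec (Aclᵀ * P) (P * Acl) (x t), dotProduct_add,
          ← Matrix.mulVec_mulVec, ← Matrix.mulVec_mulVec]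
      rw [← heq]
      exact h
    have hgW : ∀ t : ℝ, g t ≤ -(W t) := by
      intro t
      by_cases hxt : x t = 0
      · simp [hgdef, hWdef, hxt]
      · exact (key (x t) hxt).le
    have hgnn : ∀ t : ℝ, 0 ≤ g t := fun t => hM'nn (x t)
    have hVnn : ∀ t : ℝ, 0 ≤ V t := by
      intro t
      simpa using hP.posSemidef.dotProduct_mulVec_nonneg (x t)
    have hx0 : x 0 = x0 := by
      rw [hxdef]
      simp [traj]
    have hV0 : V 0 = x0 ⬝ᵥ (P *ᵥ x0) := by
      show x 0 ⬝ᵥ (P *ᵥ x 0) = _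
      rw [hx0]
    have hbound : ∀ T : ℝ, 0 ≤ T → (∫ t in (0:ℝ)..T, g t) ≤ V 0 := by
      intro T hT
      have hWint : IntervalIntegrable W MeasureTheory.volume 0 T :=
        (hquadc L).intervalIntegrable 0 T
      have hgint : IntervalIntegrable g MeasureTheory.volume 0 T :=
        (hquadc M').intervalIntegrable 0 T
      have hVT : V T - V 0 = ∫ t in (0:ℝ)..T, W t :=
        (intervalIntegral.integral_eq_sub_of_hasDerivAt (fun t _ => hVderiv t) hWint).symm
      have hmono : (∫ t in (0:ℝ)..T, g t) ≤ ∫ t in (0:ℝ)..T, -(W t) :=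
        intervalIntegral.integral_mono_on hT hgint hWint.neg (fun t _ => hgW t)
      rw [intervalIntegral.integral_neg, ← hVT] at hmono
      have := hVnn T
      linarith
    have hInt : MeasureTheory.IntegrableOn g (Set.Ioi (0:ℝ)) := by
      refine MeasureTheory.integrableOn_Ioi_of_intervalIntegral_norm_bounded (V 0) 0
        (fun i : ℝ => ((hquadc M').integrableOn_Ioc)) Filter.tendsto_id ?_
      filter_upwards [Filter.eventually_ge_atTop (0:ℝ)] with i hi
      have : (∫ t in (0:ℝ)..(id i), ‖g t‖) = ∫ t in (0:ℝ)..(id i), g t := by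
        refine intervalIntegral.integral_congr fun t _ => ?_
        exact Real.norm_of_nonneg (hgnn t)
      rw [this]
      exact hbound i hi
    have hlim := MeasureTheory.intervalIntegral_tendsto_integral_Ioi 0 hInt Filter.tendsto_id
    have hle : (∫ t in Set.Ioi (0:ℝ), g t) ≤ V 0 := by
      refine le_of_tendsto hlim ?_
      filter_upwards [Filter.eventually_ge_atTop (0:ℝ)] with i hi
      exact hbound i hi
    have hcost : costJ Acl M' x0 = ∫ t in Set.Ioi (0:ℝ), g t := rfl
    rw [hcost]
    rw [hV0] at hle
    linarith
end
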